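/- arXiv:1701.06103 — 3 statements merged into one kernel-verified Lean document; each statement's English description precedes it below -/
import Mathlib

section
/- For every LTL formula φ in negation normal form and every finite word v, the formula af(φ, v) is a Boolean combination (built from tt, ff, ∧, ∨) of formulas each of which is either φ itself or a subformula of φ that is not itself a conjunction or disjunction. -/
/-- LTL formulas in negation normal form over atomic propositions `AP`:
`φ ::= tt | ff | a | ¬a | φ∧φ | φ∨φ | Xφ | Fφ | Gφ | φUφ`. -/
inductive LTL (AP : Type) : Type
  | tt : LTL AP
  | ff : LTL AP
  | atom : AP → LTL AP
  | natom : AP → LTL AP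
  | conj : LTL AP → LTL AP → LTL AP
  | disj : LTL AP → LTL AP → LTL AP
  | next : LTL AP → LTL AP
  | ev : LTL AP → LTL AP
  | alw : LTL AP → LTL AP
  | untl : LTL AP → LTL AP → LTL AP

variable {AP : Type}

/-- The suffix of an ω-word: `wordDrop k w = w(k) w(k+1) ⋯`. -/
def wordDrop (k : ℕ) (w : ℕ → Set AP) : ℕ → Set AP := fun i => w (i + k)

/-- Standard LTL semantics over ω-words (letters are sets of atomic propositions). -/
def Sat : (ℕ → Set AP) → LTL AP → Prop
  | _, .tt => True
  | _, .ff => False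
  | w, .atom a => a ∈ w 0
  | w, .natom a => a ∉ w 0
  | w, .conj φ ψ => Sat w φ ∧ Sat w ψ
  | w, .disj φ ψ => Sat w φ ∨ Sat w ψ
  | w, .next φ => Sat (wordDrop 1 w) φ
  | w, .ev φ => ∃ k, Sat (wordDrop k w) φ
  | w, .alw φ => ∀ k, Sat (wordDrop k w) φ
  | w, .untl φ ψ => ∃ k, Sat (wordDrop k w) ψ ∧ ∀ j < k, Sat (wordDrop j w) φ

open Classical in
/-- The "after" function `af(φ, ν)` for a single letter `ν`. -/
noncomputable def af : LTL AP → Set AP → LTL AP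
  | .tt, _ => .tt
  | .ff, _ => .ff
  | .atom a, ν => if a ∈ ν then .tt else .ff
  | .natom a, ν => if a ∈ ν then .ff else .tt
  | .conj φ ψ, ν => .conj (af φ ν) (af ψ ν)
  | .disj φ ψ, ν => .disj (af φ ν) (af ψ ν)
  | .next φ, _ => φ
  | .ev φ, ν => .disj (af φ ν) (.ev φ)
  | .alw φ, ν => .conj (af φ ν) (.alw φ)
  | .untl φ ψ, ν => .disj (af ψ ν) (.conj (af φ ν) (.untl φ ψ))

/-- `af` extended to finite words: `af(φ, ε) = φ`, `af(φ, νv) = af(af(φ,ν), v)`. -/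
noncomputable def afWord : LTL AP → List (Set AP) → LTL AP
  | φ, [] => φ
  | φ, ν :: v => afWord (af φ ν) v

/-- Prepend a finite word `v` to an ω-word `w`. -/
def prependWord (v : List (Set AP)) (w : ℕ → Set AP) : ℕ → Set AP :=
  fun i => if h : i < v.length then v.get ⟨i, h⟩ else w (i - v.length)

/-- A formula is proper if it is neither a conjunction nor a disjunction. -/
def IsProper : LTL AP → Prop
  | .conj _ _ => False
  | .disj _ _ => False
  | _ => True

/-- The subformula relation. -/
inductive Subf : LTL AP → LTL AP → Prop
  | refl (φ) : Subf φ φ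
  | conj_left {χ φ ψ} : Subf χ φ → Subf χ (.conj φ ψ)
  | conj_right {χ φ ψ} : Subf χ ψ → Subf χ (.conj φ ψ)
  | disj_left {χ φ ψ} : Subf χ φ → Subf χ (.disj φ ψ)
  | disj_right {χ φ ψ} : Subf χ ψ → Subf χ (.disj φ ψ)
  | next {χ φ} : Subf χ φ → Subf χ (.next φ)
  | ev {χ φ} : Subf χ φ → Subf χ (.ev φ)
  | alw {χ φ} : Subf χ φ → Subf χ (.alw φ)
  | untl_left {χ φ ψ} : Subf χ φ → Subf χ (.untl φ ψ)
  | untl_right {χ φ ψ} : Subf χ ψ → Subf χ (.untl φ ψ)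

/-- Boolean combinations of a set `S` of formulas: built from members of `S`,
`tt` and `ff` using only `∧` and `∨`. -/
inductive BoolComb (S : Set (LTL AP)) : LTL AP → Prop
  | tt : BoolComb S .tt
  | ff : BoolComb S .ff
  | base {φ} : φ ∈ S → BoolComb S φ
  | conj {φ ψ} : BoolComb S φ → BoolComb S ψ → BoolComb S (.conj φ ψ)
  | disj {φ ψ} : BoolComb S φ → BoolComb S ψ → BoolComb S (.disj φ ψ)

theorem Subf.trans' {χ ψ φ : LTL AP} (h1 : Subf χ ψ) (h2 : Subf ψ φ) : Subf χ φ := by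
  induction h2 with
  | refl => exact h1
  | conj_left _ ih => exact Subf.conj_left ih
  | conj_right _ ih => exact Subf.conj_right ih
  | disj_left _ ih => exact Subf.disj_left ih
  | disj_right _ ih => exact Subf.disj_right ih
  | next _ ih => exact Subf.next ih
  | ev _ ih => exact Subf.ev ih
  | alw _ ih => exact Subf.alw ih
  | untl_left _ ih => exact Subf.untl_left ih
  | untl_right _ ih => exact Subf.untl_right ih

theorem BoolComb.mono {S T : Set (LTL AP)} (hST : S ⊆ T) {χ : LTL AP}
    (h : BoolComb S χ) : BoolComb T χ := by
  induction h with
  | tt => exact .tt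
  | ff => exact .ff
  | base h => exact .base (hST h)
  | conj _ _ ih1 ih2 => exact .conj ih1 ih2
  | disj _ _ ih1 ih2 => exact .disj ih1 ih2

theorem BoolComb.monoSubf {χ φ ρ : LTL AP}
    (h : BoolComb {ψ : LTL AP | Subf ψ χ ∧ IsProper ψ} ρ)
    (hsub : ∀ x : LTL AP, Subf x χ → Subf x φ) :
    BoolComb {ψ : LTL AP | Subf ψ φ ∧ IsProper ψ} ρ :=
  BoolComb.mono (S := {ψ : LTL AP | Subf ψ χ ∧ IsProper ψ})
    (T := {ψ : LTL AP | Subf ψ φ ∧ IsProper ψ})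
    (fun x hx => ⟨hsub x hx.1, hx.2⟩) h

/-- Every formula is a Boolean combination of its proper subformulas. -/
theorem boolComb_proper (χ : LTL AP) :
    BoolComb {ψ : LTL AP | Subf ψ χ ∧ IsProper ψ} χ := by
  induction χ with
  | conj φ ψ ihφ ihψ =>
      exact .conj
        (ihφ.monoSubf fun x hx => Subf.conj_left hx)
        (ihψ.monoSubf fun x hx => Subf.conj_right hx)
  | disj φ ψ ihφ ihψ =>
      exact .disj
        (ihφ.monoSubf fun x hx => Subf.disj_left hx)
        (ihψ.monoSubf fun x hx => Subf.disj_right hx)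
  | tt => exact .base ⟨Subf.refl _, trivial⟩
  | ff => exact .base ⟨Subf.refl _, trivial⟩
  | atom a => exact .base ⟨Subf.refl _, trivial⟩
  | natom a => exact .base ⟨Subf.refl _, trivial⟩
  | next φ _ => exact .base ⟨Subf.refl _, trivial⟩
  | ev φ _ => exact .base ⟨Subf.refl _, trivial⟩
  | alw φ _ => exact .base ⟨Subf.refl _, trivial⟩
  | untl φ ψ _ _ => exact .base ⟨Subf.refl _, trivial⟩

/-- `af φ ν` is a Boolean combination of proper subformulas of `φ`. -/
theorem boolComb_af (φ : LTL AP) (ν : Set AP) :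
    BoolComb {ψ : LTL AP | Subf ψ φ ∧ IsProper ψ} (af φ ν) := by
  induction φ with
  | tt => exact .tt
  | ff => exact .ff
  | atom a =>
      simp only [af]; split
      · exact .tt
      · exact .ff
  | natom a =>
      simp only [af]; split
      · exact .ff
      · exact .tt
  | conj φ ψ ihφ ihψ =>
      exact .conj
        (ihφ.monoSubf fun x hx => Subf.conj_left hx)
        (ihψ.monoSubf fun x hx => Subf.conj_right hx)
  | disj φ ψ ihφ ihψ =>
      exact .disj
        (ihφ.monoSubf fun x hx => Subf.disj_left hx)
        (ihψ.monoSubf fun x hx => Subf.disj_right hx)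
  | next φ _ =>
      exact (boolComb_proper φ).monoSubf fun x hx => Subf.next hx
  | ev φ ih =>
      exact .disj (ih.monoSubf fun x hx => Subf.ev hx)
        (.base ⟨Subf.refl _, trivial⟩)
  | alw φ ih =>
      exact .conj (ih.monoSubf fun x hx => Subf.alw hx)
        (.base ⟨Subf.refl _, trivial⟩)
  | untl φ ψ ihφ ihψ =>
      exact .disj (ihψ.monoSubf fun x hx => Subf.untl_right hx)
        (.conj (ihφ.monoSubf fun x hx => Subf.untl_left hx)
          (.base ⟨Subf.refl _, trivial⟩))

theorem boolComb_af_closed {S : Set (LTL AP)} {χ : LTL AP} (ν : Set AP)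
    (hS : ∀ ψ ∈ S, BoolComb S (af ψ ν)) (h : BoolComb S χ) :
    BoolComb S (af χ ν) := by
  induction h with
  | tt => exact .tt
  | ff => exact .ff
  | base h => exact hS _ h
  | conj _ _ ih1 ih2 => exact .conj ih1 ih2
  | disj _ _ ih1 ih2 => exact .disj ih1 ih2

/-- For every LTL formula `φ` in negation normal form and every finite word `v`,
`af(φ, v)` is a Boolean combination of proper subformulas of `φ` (together with
`φ` itself). -/
theorem stmt_6 {AP : Type} (φ : LTL AP) (v : List (Set AP)) :
    BoolComb {ψ : LTL AP | (Subf ψ φ ∧ IsProper ψ) ∨ ψ = φ} (afWord φ v) := by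
  have hclosed : ∀ ν, ∀ ψ ∈ {ψ : LTL AP | (Subf ψ φ ∧ IsProper ψ) ∨ ψ = φ},
      BoolComb {ψ : LTL AP | (Subf ψ φ ∧ IsProper ψ) ∨ ψ = φ} (af ψ ν) := by
    intro ν ψ hψ
    refine BoolComb.mono (S := {x : LTL AP | Subf x ψ ∧ IsProper x})
      (fun x hx => Or.inl ⟨?_, hx.2⟩) (boolComb_af ψ ν)
    rcases hψ with ⟨hψφ, _⟩ | rfl
    · exact hx.1.trans' hψφ
    · exact hx.1
  suffices h : ∀ (v : List (Set AP)) (χ : LTL AP),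
      BoolComb {ψ : LTL AP | (Subf ψ φ ∧ IsProper ψ) ∨ ψ = φ} χ →
      BoolComb {ψ : LTL AP | (Subf ψ φ ∧ IsProper ψ) ∨ ψ = φ} (afWord χ v) by
    exact h v φ (.base (Or.inr rfl))
  intro v
  induction v with
  | nil => intro χ h; exact h
  | cons ν v ih =>
      intro χ h
      exact ih _ (boolComb_af_closed ν (hclosed ν) h)
end

section
/- The monitor DBA U(Gψ') for a G-free formula ψ' accepts an ω-word w from a state (ξ₁, ξ₂) if and only if w ⊨ Gψ' ∧ ξ₁ ∧ ξ₂. -/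
variable {AP : Type}

/-- Propositional evaluation of a formula: proper formulas (non-`∧`/`∨`) are treated
as propositional atoms, evaluated by the assignment `v`. -/
def propEval (v : LTL AP → Prop) : LTL AP → Prop
  | .tt => True
  | .ff => False
  | .conj φ ψ => propEval v φ ∧ propEval v ψ
  | .disj φ ψ => propEval v φ ∨ propEval v ψ
  | φ => v φ

/-- Propositional equivalence `≡_P` of formulas. -/
def PropEquiv (φ ψ : LTL AP) : Prop := ∀ v, propEval v φ ↔ propEval v ψ

open Classical in
/-- The transition function of the monitor DBA `U(Gψ')`:
`δ((ξ₁,ξ₂), ν) = (af(ξ₂,ν) ∧ ψ', tt)` if `af(ξ₁,ν) ≡_P tt`, and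
`(af(ξ₁,ν), af(ξ₂,ν) ∧ ψ')` otherwise. -/
noncomputable def monStep (ψ' : LTL AP) (p : LTL AP × LTL AP) (ν : Set AP) :
    LTL AP × LTL AP :=
  if PropEquiv (af p.1 ν) .tt then (.conj (af p.2 ν) ψ', .tt)
  else (af p.1 ν, .conj (af p.2 ν) ψ')

/-- The unique run of the monitor from state `p` on the ω-word `w`. -/
noncomputable def monRun (ψ' : LTL AP) (p : LTL AP × LTL AP) (w : ℕ → Set AP) :
    ℕ → LTL AP × LTL AP
  | 0 => p
  | n + 1 => monStep ψ' (monRun ψ' p w n) (w n)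

/-- The monitor accepts `w` from state `p`: infinitely many accepting transitions
(those with `af(ξ₁,ν) ≡_P tt`) are taken on the unique run from `p`. -/
noncomputable def MonAcceptsFrom (ψ' : LTL AP) (p : LTL AP × LTL AP)
    (w : ℕ → Set AP) : Prop :=
  ∀ N, ∃ i, N ≤ i ∧ PropEquiv (af (monRun ψ' p w i).1 (w i)) .tt

/-- The states of the monitor DBA: pairs reachable from the initial state
`(ψ', tt)`. -/
inductive MonReach (ψ' : LTL AP) : LTL AP × LTL AP → Prop
  | init : MonReach ψ' (ψ', .tt)
  | step {p : LTL AP × LTL AP} {ν : Set AP} :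
      MonReach ψ' p → MonReach ψ' (monStep ψ' p ν)

/-- A formula is `G`-free if it contains no `G` operator. -/
def GFree : LTL AP → Prop
  | .alw _ => False
  | .conj φ ψ => GFree φ ∧ GFree ψ
  | .disj φ ψ => GFree φ ∧ GFree ψ
  | .next φ => GFree φ
  | .ev φ => GFree φ
  | .untl φ ψ => GFree φ ∧ GFree ψ
  | _ => True


lemma wordDrop_zero (w : ℕ → Set AP) : wordDrop 0 w = w := rfl

lemma wordDrop_wordDrop (m n : ℕ) (w : ℕ → Set AP) :
    wordDrop m (wordDrop n w) = wordDrop (m + n) w := by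
  funext i
  simp only [wordDrop, Nat.add_assoc]

theorem sat_iff_sat_af (φ : LTL AP) (w : ℕ → Set AP) :
    Sat w φ ↔ Sat (wordDrop 1 w) (af φ (w 0)) := by
  induction φ generalizing w with
  | atom a | natom a => by_cases h : a ∈ w 0 <;> simp [Sat, af, h]
  | conj φ ψ ihφ ihψ | disj φ ψ ihφ ihψ => simp only [Sat, af, ihφ w, ihψ w]
  | ev φ ih =>
    simp only [Sat, af]
    rw [← Nat.or_exists_add_one, wordDrop_zero, ih w]
    simp only [wordDrop_wordDrop]
  | alw φ ih =>
    simp only [Sat, af]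
    rw [← Nat.and_forall_add_one, wordDrop_zero, ih w]
    simp only [wordDrop_wordDrop]
  | untl φ ψ ihφ ihψ =>
    simp only [Sat, af]
    rw [← Nat.or_exists_add_one, wordDrop_zero, ihψ w]
    simp only [Nat.forall_lt_succ_left, wordDrop_zero, ihφ w, wordDrop_wordDrop, Nat.not_lt_zero,
      IsEmpty.forall_iff, forall_const, and_true, and_left_comm, exists_and_left]
  | _ => simp [Sat, af]

theorem sat_iff_sat_af_at (φ : LTL AP) (w : ℕ → Set AP) (n : ℕ) :
    Sat (wordDrop n w) φ ↔ Sat (wordDrop (n + 1) w) (af φ (w n)) := by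
  rw [sat_iff_sat_af, wordDrop_wordDrop, Nat.add_comm 1 n]
  simp [wordDrop]

lemma propEval_sat (w : ℕ → Set AP) (φ : LTL AP) : propEval (Sat w) φ ↔ Sat w φ := by
  induction φ with
  | conj φ ψ ihφ ihψ | disj φ ψ ihφ ihψ => simp only [propEval, Sat, ihφ, ihψ]
  | _ => simp only [propEval, Sat]

lemma propEquiv_tt_iff {φ : LTL AP} : PropEquiv φ .tt ↔ ∀ v, propEval v φ := by
  simp only [PropEquiv, propEval, iff_true]

lemma sat_of_propEquiv_tt {φ : LTL AP} (h : PropEquiv φ .tt) (w : ℕ → Set AP) : Sat w φ :=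
  (propEval_sat w φ).mp (propEquiv_tt_iff.mp h _)

lemma propEval_af (v : LTL AP → Prop) (φ : LTL AP) (ν : Set AP) :
    propEval v (af φ ν) ↔ propEval (fun α => propEval v (af α ν)) φ := by
  induction φ with
  | conj φ ψ ihφ ihψ | disj φ ψ ihφ ihψ => simp only [af, propEval, ihφ, ihψ]
  | tt | ff => simp only [af, propEval]
  | _ => simp only [propEval]

lemma propEquiv_tt_af {φ : LTL AP} (h : PropEquiv φ .tt) (ν : Set AP) :
    PropEquiv (af φ ν) .tt :=
  propEquiv_tt_iff.mpr fun v => (propEval_af v φ ν).mpr (propEquiv_tt_iff.mp h _)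

lemma propEquiv_tt_conj {φ ψ : LTL AP} (hφ : PropEquiv φ .tt) (hψ : PropEquiv ψ .tt) :
    PropEquiv (.conj φ ψ) .tt :=
  propEquiv_tt_iff.mpr fun v => ⟨propEquiv_tt_iff.mp hφ v, propEquiv_tt_iff.mp hψ v⟩

lemma propEquiv_tt_disj_left {φ : LTL AP} (hφ : PropEquiv φ .tt) (ψ : LTL AP) :
    PropEquiv (.disj φ ψ) .tt :=
  propEquiv_tt_iff.mpr fun v => .inl (propEquiv_tt_iff.mp hφ v)

lemma propEquiv_tt_disj_right (φ : LTL AP) {ψ : LTL AP} (hψ : PropEquiv ψ .tt) :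
    PropEquiv (.disj φ ψ) .tt :=
  propEquiv_tt_iff.mpr fun v => .inr (propEquiv_tt_iff.mp hψ v)

/-- Positional form of `∃ k, afWord φ [w n, …, w (n + k - 1)] ≡_P tt`. -/
inductive EventuallyTT (w : ℕ → Set AP) : ℕ → LTL AP → Prop
  | now {n : ℕ} {φ : LTL AP} : PropEquiv φ .tt → EventuallyTT w n φ
  | later {n : ℕ} {φ : LTL AP} : EventuallyTT w (n + 1) (af φ (w n)) → EventuallyTT w n φ

namespace EventuallyTT

variable {w : ℕ → Set AP} {n : ℕ} {φ ψ : LTL AP}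

lemma af (h : EventuallyTT w n φ) : EventuallyTT w (n + 1) (af φ (w n)) := by
  cases h with
  | now h => exact now (propEquiv_tt_af h _)
  | later h => exact h

lemma conj (hφ : EventuallyTT w n φ) (hψ : EventuallyTT w n ψ) :
    EventuallyTT w n (.conj φ ψ) := by
  induction hφ generalizing ψ with
  | @now _ φ hφ =>
    induction hψ generalizing φ with
    | now hψ => exact now (propEquiv_tt_conj hφ hψ)
    | later _ ih => exact later (ih (propEquiv_tt_af hφ _))
  | later _ ih => exact later (ih hψ.af)

lemma disj_left (hφ : EventuallyTT w n φ) (ψ : LTL AP) : EventuallyTT w n (.disj φ ψ) := by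
  induction hφ generalizing ψ with
  | now hφ => exact now (propEquiv_tt_disj_left hφ ψ)
  | later _ ih => exact later (ih _)

lemma disj_right (φ : LTL AP) (hψ : EventuallyTT w n ψ) : EventuallyTT w n (.disj φ ψ) := by
  induction hψ generalizing φ with
  | now hψ => exact now (propEquiv_tt_disj_right φ hψ)
  | later _ ih => exact later (ih _)

end EventuallyTT

theorem eventuallyTT_of_sat {φ : LTL AP} (hφ : GFree φ) {w : ℕ → Set AP} {n : ℕ}
    (h : Sat (wordDrop n w) φ) : EventuallyTT w n φ := by
  induction φ generalizing n with
  | tt => exact .now fun _ => Iff.rfl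
  | ff => exact h.elim
  | atom a | natom a =>
    refine .later (.now ?_)
    simp only [Sat, wordDrop, Nat.zero_add] at h
    simp only [af, h, if_true, if_false]
    exact fun _ => Iff.rfl
  | conj φ ψ ihφ ihψ => exact (ihφ hφ.1 h.1).conj (ihψ hφ.2 h.2)
  | disj φ ψ ihφ ihψ =>
    exact h.elim (fun h => (ihφ hφ.1 h).disj_left ψ) (fun h => (ihψ hφ.2 h).disj_right φ)
  | next φ ih =>
    rw [Sat, wordDrop_wordDrop, Nat.add_comm] at h
    exact .later (ih hφ h)
  | ev φ ih =>
    obtain ⟨k, hk⟩ := h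
    rw [wordDrop_wordDrop] at hk
    induction k generalizing n with
    | zero => exact .later ((ih hφ (by rwa [Nat.zero_add] at hk)).af.disj_left _)
    | succ k ihk =>
      rw [Nat.add_right_comm] at hk
      exact .later ((ihk hk).disj_right _)
  | alw φ _ => exact hφ.elim
  | untl φ ψ ihφ ihψ =>
    obtain ⟨k, hψk, hφj⟩ := h
    rw [wordDrop_wordDrop] at hψk
    induction k generalizing n with
    | zero => exact .later ((ihψ hφ.2 (by rwa [Nat.zero_add] at hψk)).af.disj_left _)
    | succ k ihk =>
      have hφn : Sat (wordDrop n w) φ := by simpa [wordDrop_wordDrop] using hφj 0 k.succ_pos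
      rw [Nat.add_right_comm] at hψk
      have hU : EventuallyTT w (n + 1) (.untl φ ψ) := ihk hψk fun j hj => by
        simpa [wordDrop_wordDrop, Nat.add_right_comm, Nat.add_assoc] using hφj (j + 1) (by omega)
      exact .later (((ihφ hφ.1 hφn).af.conj hU).disj_right _)

lemma GFree.af {φ : LTL AP} (hφ : GFree φ) (ν : Set AP) : GFree (af φ ν) := by
  induction φ with
  | atom a | natom a => by_cases h : a ∈ ν <;> simp [_root_.af, GFree, h]
  | conj φ ψ ihφ ihψ | disj φ ψ ihφ ihψ => exact ⟨ihφ hφ.1, ihψ hφ.2⟩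
  | ev φ ih => exact ⟨ih hφ, hφ⟩
  | untl φ ψ ihφ ihψ => exact ⟨ihψ hφ.2, ihφ hφ.1, hφ⟩
  | alw φ _ => exact hφ.elim
  | next φ _ => exact hφ
  | tt | ff => trivial

namespace MonReach

variable {ψ' : LTL AP} {p : LTL AP × LTL AP}

lemma gFree (h : MonReach ψ' p) (hψ' : GFree ψ') : GFree p.1 ∧ GFree p.2 := by
  induction h with
  | init => exact ⟨hψ', trivial⟩
  | @step p ν _ ih =>
    unfold monStep
    split_ifs
    · exact ⟨⟨ih.2.af ν, hψ'⟩, trivial⟩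
    · exact ⟨ih.1.af ν, ih.2.af ν, hψ'⟩

lemma sat_of_sat_fst_snd (h : MonReach ψ' p) {w : ℕ → Set AP} (h₁ : Sat w p.1)
    (h₂ : Sat w p.2) : Sat w ψ' := by
  cases h with
  | init => exact h₁
  | step =>
    unfold monStep at h₁ h₂
    split_ifs at h₁ h₂
    · exact h₁.2
    · exact h₂.2

lemma monRun (h : MonReach ψ' p) (w : ℕ → Set AP) (n : ℕ) :
    MonReach ψ' (monRun ψ' p w n) := by
  induction n with
  | zero => exact h
  | succ n ih => exact ih.step

end MonReach

section Run

variable {ψ' : LTL AP} {p : LTL AP × LTL AP} {w : ℕ → Set AP} {n : ℕ}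

def AcceptingAt (ψ' : LTL AP) (p : LTL AP × LTL AP) (w : ℕ → Set AP) (n : ℕ) : Prop :=
  PropEquiv (af (monRun ψ' p w n).1 (w n)) .tt

lemma monRun_succ_of_acceptingAt (h : AcceptingAt ψ' p w n) :
    monRun ψ' p w (n + 1) = (.conj (af (monRun ψ' p w n).2 (w n)) ψ', .tt) :=
  if_pos h

lemma monRun_succ_of_not_acceptingAt (h : ¬ AcceptingAt ψ' p w n) :
    monRun ψ' p w (n + 1) =
      (af (monRun ψ' p w n).1 (w n), .conj (af (monRun ψ' p w n).2 (w n)) ψ') :=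
  if_neg h

lemma sat_monRun_fst_of_succ (h : Sat (wordDrop (n + 1) w) (monRun ψ' p w (n + 1)).1) :
    Sat (wordDrop n w) (monRun ψ' p w n).1 := by
  rw [sat_iff_sat_af_at]
  by_cases hacc : AcceptingAt ψ' p w n
  · exact sat_of_propEquiv_tt hacc _
  · rwa [monRun_succ_of_not_acceptingAt hacc] at h

lemma sat_monRun_of_succ (h₁ : Sat (wordDrop (n + 1) w) (monRun ψ' p w (n + 1)).1)
    (h₂ : Sat (wordDrop (n + 1) w) (monRun ψ' p w (n + 1)).2) :
    Sat (wordDrop n w) (monRun ψ' p w n).1 ∧ Sat (wordDrop n w) (monRun ψ' p w n).2 := by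
  refine ⟨sat_monRun_fst_of_succ h₁, (sat_iff_sat_af_at _ w n).mpr ?_⟩
  by_cases hacc : AcceptingAt ψ' p w n
  · rw [monRun_succ_of_acceptingAt hacc] at h₁
    exact h₁.1
  · rw [monRun_succ_of_not_acceptingAt hacc] at h₂
    exact h₂.1

lemma sat_monRun_succ (h₁ : Sat (wordDrop n w) (monRun ψ' p w n).1)
    (h₂ : Sat (wordDrop n w) (monRun ψ' p w n).2) (hψ' : Sat (wordDrop (n + 1) w) ψ') :
    Sat (wordDrop (n + 1) w) (monRun ψ' p w (n + 1)).1 ∧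
      Sat (wordDrop (n + 1) w) (monRun ψ' p w (n + 1)).2 := by
  have e₁ := (sat_iff_sat_af_at _ w n).mp h₁
  have e₂ := (sat_iff_sat_af_at _ w n).mp h₂
  by_cases hacc : AcceptingAt ψ' p w n
  · rw [monRun_succ_of_acceptingAt hacc]
    exact ⟨⟨e₂, hψ'⟩, trivial⟩
  · rw [monRun_succ_of_not_acceptingAt hacc]
    exact ⟨e₁, e₂, hψ'⟩

theorem sat_monRun (hψ' : ∀ k, Sat (wordDrop k w) ψ') (h₁ : Sat w p.1) (h₂ : Sat w p.2)
    (n : ℕ) :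
    Sat (wordDrop n w) (monRun ψ' p w n).1 ∧ Sat (wordDrop n w) (monRun ψ' p w n).2 := by
  induction n with
  | zero => exact ⟨h₁, h₂⟩
  | succ n ih => exact sat_monRun_succ ih.1 ih.2 (hψ' _)

lemma sat_monRun_fst_of_acceptingAt {i : ℕ} (hi : AcceptingAt ψ' p w i) (hn : n ≤ i) :
    Sat (wordDrop n w) (monRun ψ' p w n).1 :=
  Nat.decreasingInduction (motive := fun j _ => Sat (wordDrop j w) (monRun ψ' p w j).1)
    (fun _ _ => sat_monRun_fst_of_succ)
    ((sat_iff_sat_af_at _ w i).mpr (sat_of_propEquiv_tt hi _)) hn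

lemma sat_monRun_of_acceptingAt {i i' : ℕ} (hi : AcceptingAt ψ' p w i)
    (hi' : AcceptingAt ψ' p w i') (hii' : i < i') (hn : n ≤ i) :
    Sat (wordDrop n w) (monRun ψ' p w n).1 ∧ Sat (wordDrop n w) (monRun ψ' p w n).2 := by
  have h₁ := sat_monRun_fst_of_acceptingAt hi' hii'
  have h₂ : Sat (wordDrop (i + 1) w) (monRun ψ' p w (i + 1)).2 := by
    rw [monRun_succ_of_acceptingAt hi]
    trivial
  exact Nat.decreasingInduction
    (motive := fun j _ => Sat (wordDrop j w) (monRun ψ' p w j).1 ∧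
      Sat (wordDrop j w) (monRun ψ' p w j).2)
    (fun _ _ h => sat_monRun_of_succ h.1 h.2) ⟨h₁, h₂⟩ (hn.trans i.le_succ)

theorem sat_of_monAcceptsFrom (hp : MonReach ψ' p) (hacc : MonAcceptsFrom ψ' p w) :
    Sat w (.conj (.alw ψ') (.conj p.1 p.2)) := by
  have hsat (n : ℕ) :
      Sat (wordDrop n w) (monRun ψ' p w n).1 ∧ Sat (wordDrop n w) (monRun ψ' p w n).2 := by
    obtain ⟨i, hni, hi⟩ := hacc n
    obtain ⟨i', hii', hi'⟩ := hacc (i + 1)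
    exact sat_monRun_of_acceptingAt hi hi' hii' hni
  exact ⟨fun k => (hp.monRun w k).sat_of_sat_fst_snd (hsat k).1 (hsat k).2, hsat 0⟩

lemma exists_acceptingAt_of_eventuallyTT {N : ℕ} (h : EventuallyTT w N (monRun ψ' p w N).1) :
    ∃ i, N ≤ i ∧ AcceptingAt ψ' p w i := by
  generalize hφ : (monRun ψ' p w N).1 = φ at h
  induction h with
  | @now n φ htt =>
    subst hφ
    exact ⟨n, le_rfl, propEquiv_tt_af htt _⟩
  | @later n φ _ ih =>
    by_cases hacc : AcceptingAt ψ' p w n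
    · exact ⟨n, le_rfl, hacc⟩
    · obtain ⟨i, hi, hacc'⟩ := ih (by rw [monRun_succ_of_not_acceptingAt hacc, hφ])
      exact ⟨i, by omega, hacc'⟩

theorem monAcceptsFrom_of_sat (hψ' : GFree ψ') (hp : MonReach ψ' p)
    (h : Sat w (.conj (.alw ψ') (.conj p.1 p.2))) : MonAcceptsFrom ψ' p w := fun N =>
  exists_acceptingAt_of_eventuallyTT <| eventuallyTT_of_sat ((hp.monRun w N).gFree hψ').1
    (sat_monRun h.1 h.2.1 h.2.2 N).1

end Run

/-- The monitor DBA `U(Gψ')` for a `G`-free formula `ψ'` accepts an ω-word `w` from a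
state `(ξ₁, ξ₂)` iff `w ⊨ Gψ' ∧ ξ₁ ∧ ξ₂`. -/
theorem stmt_15 {AP : Type} (ψ' ξ₁ ξ₂ : LTL AP) (hG : GFree ψ')
    (hreach : MonReach ψ' (ξ₁, ξ₂)) (w : ℕ → Set AP) :
    MonAcceptsFrom ψ' (ξ₁, ξ₂) w ↔
      Sat w (.conj (.alw ψ') (.conj ξ₁ ξ₂)) :=
  ⟨sat_of_monAcceptsFrom hreach, monAcceptsFrom_of_sat hG hreach⟩
end

section
/- Replacing a redundant vertex in the run DAG preserves acceptance: if in the reduced DAG G_w* each removed vertex v_k satisfies L(v_k) ⊆ ⋃_{j<k} L(v_j) (languages of the ⊑-smaller vertices at the same level), then the color summary of G_w* is even if and only if G_w contains an accepting run. -/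
set_option linter.unusedSectionVars false
set_option maxHeartbeats 1000000


/-- A limit-deterministic Büchi automaton `(Q, q₀, Σ, δ, α)` with deterministic part
`Qd`, equipped with an ordering `Ord` of the states w.r.t. `Qd`: `Ord` maps `Qd`
injectively into `{1,…,|Qd|}` and everything outside `Qd` to `∞`. -/
structure LDBA (Q A : Type) where
  q0 : Q
  δ : Q → A → Q → Prop
  α : Q → A → Q → Prop
  Qd : Set Q
  acc_sub : ∀ q σ q', α q σ q' → δ q σ q' ∧ q ∈ Qd ∧ q' ∈ Qd
  det : ∀ q ∈ Qd, ∀ (σ : A) (q₁ q₂ : Q), δ q σ q₁ → δ q σ q₂ → q₁ = q₂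
  trap : ∀ q ∈ Qd, ∀ (σ : A) (q' : Q), δ q σ q' → q' ∈ Qd
  init_out : q0 ∉ Qd
  Ord : Q → ℕ∞
  ord_top : ∀ q, Ord q = ⊤ ↔ q ∉ Qd
  ord_range : ∀ q ∈ Qd, 1 ≤ Ord q ∧ Ord q ≤ (Qd.ncard : ℕ∞)
  ord_inj : ∀ q ∈ Qd, ∀ q' ∈ Qd, Ord q = Ord q' → q = q'

variable {Q A : Type}

namespace LDBA

/-- `ρ` is a run prefix of length `n+1` of `M` on `w` (a path of the run DAG from
level `0` to level `n`). -/
def IsRunPrefix (M : LDBA Q A) (w : ℕ → A) (ρ : ℕ → Q) (n : ℕ) : Prop :=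
  ρ 0 = M.q0 ∧ ∀ i < n, M.δ (ρ i) (w i) (ρ (i + 1))

/-- `ρ` is an (infinite) run of `M` on `w`. -/
def IsRun (M : LDBA Q A) (w : ℕ → A) (ρ : ℕ → Q) : Prop :=
  ρ 0 = M.q0 ∧ ∀ i, M.δ (ρ i) (w i) (ρ (i + 1))

/-- `ρ` is an accepting run of `M` on `w`: it takes infinitely many accepting
transitions. -/
def AcceptingRun (M : LDBA Q A) (w : ℕ → A) (ρ : ℕ → Q) : Prop :=
  IsRun M w ρ ∧ ∀ N, ∃ i, N ≤ i ∧ M.α (ρ i) (w i) (ρ (i + 1))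

/-- The lexicographic preorder `⊑` (induced by `Ord`) on run prefixes of length
`n+1`. -/
def PrefLe (M : LDBA Q A) (ρ ρ' : ℕ → Q) (n : ℕ) : Prop :=
  (∀ i ≤ n, M.Ord (ρ i) = M.Ord (ρ' i)) ∨
    ∃ i ≤ n, M.Ord (ρ i) < M.Ord (ρ' i) ∧ ∀ j < i, M.Ord (ρ j) = M.Ord (ρ' j)

/-- The `Qd`-vertices of level `i` of the run DAG `G_w` (identified with their
states). -/
def Vd (M : LDBA Q A) (w : ℕ → A) (i : ℕ) : Set Q :=
  {q | q ∈ M.Qd ∧ ∃ ρ, IsRunPrefix M w ρ i ∧ ρ i = q}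

/-- `q ⊏ᵢ q'` on level `i`: some run prefix ending in `q` is `⊑`-smaller than all
run prefixes ending in `q'`. -/
def VLt (M : LDBA Q A) (w : ℕ → A) (i : ℕ) (q q' : Q) : Prop :=
  ∃ ρ, IsRunPrefix M w ρ i ∧ ρ i = q ∧
    ∀ ρ', IsRunPrefix M w ρ' i → ρ' i = q' → PrefLe M ρ ρ' i

/-- The index of a `Qd`-vertex `q` of level `i`: its rank (starting at `1`) in the
total order `⊏ᵢ` on `Vd i`. -/
noncomputable def Ind (M : LDBA Q A) (w : ℕ → A) (i : ℕ) (q : Q) : ℕ :=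
  Set.ncard {q' | q' ∈ Vd M w i ∧ q' ≠ q ∧ VLt M w i q' q} + 1

/-- `Dec(V_i^d)`: the `Qd`-vertices of level `i` whose successor in level `i+1` has a
strictly smaller index. -/
noncomputable def Dec (M : LDBA Q A) (w : ℕ → A) (i : ℕ) : Set Q :=
  {q | q ∈ Vd M w i ∧ ∃ q', M.δ q (w i) q' ∧ Ind M w (i + 1) q' < Ind M w i q}

/-- `Acc(V_i^d)`: the `Qd`-vertices of level `i` that are the source of an accepting
transition on `w(i)`. -/
def Acc (M : LDBA Q A) (w : ℕ → A) (i : ℕ) : Set Q :=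
  {q | q ∈ Vd M w i ∧ ∃ q', M.α q (w i) q'}

open Classical in
/-- The color assigned to the step from level `i` to level `i+1` of the run DAG. -/
noncomputable def color (M : LDBA Q A) (w : ℕ → A) (i : ℕ) : ℕ :=
  if (Dec M w i).Nonempty then
    if (Acc M w i).Nonempty then
      min (2 * sInf (Ind M w i '' Dec M w i) - 1) (2 * sInf (Ind M w i '' Acc M w i))
    else 2 * sInf (Ind M w i '' Dec M w i) - 1
  else if (Acc M w i).Nonempty then 2 * sInf (Ind M w i '' Acc M w i)
  else 2 * M.Qd.ncard + 1

/-- The color summary: the minimal color occurring infinitely often. -/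
noncomputable def colorSummary (M : LDBA Q A) (w : ℕ → A) : ℕ :=
  sInf {c | ∀ N, ∃ i, N ≤ i ∧ color M w i = c}

end LDBA

namespace LDBA

/-- The language of the LDBA from state `q`: ω-words admitting a run from `q` with
infinitely many accepting transitions. -/
def Lang (M : LDBA Q A) (q : Q) : Set (ℕ → A) :=
  {u | ∃ ρ : ℕ → Q, ρ 0 = q ∧ (∀ i, M.δ (ρ i) (u i) (ρ (i + 1))) ∧
    ∀ N, ∃ i, N ≤ i ∧ M.α (ρ i) (u i) (ρ (i + 1))}

end LDBA

section Reduced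

variable [DecidableEq Q]

/-- Remove duplicates from a list keeping the first (smallest) occurrence. -/
def dedupFirst (l : List Q) : List Q :=
  l.foldl (fun acc q => if q ∈ acc then acc else acc ++ [q]) []

/-- The index (starting at 1) of an element in an ordered level list. -/
def idxL (l : List Q) (q : Q) : ℕ := l.idxOf q + 1

section ListLemmas
open List

theorem idx_le_of_getElem {l : List Q} {x : Q} {i : ℕ} (h : i < l.length) (hx : l[i] = x) :
    l.idxOf x ≤ i := by
  induction l generalizing i with
  | nil => simp at h
  | cons a l ih =>
    cases i with
    | zero => simp at hx; simp [hx, List.idxOf_cons_self]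
    | succ i =>
      rcases eq_or_ne a x with rfl | hne
      · simp [List.idxOf_cons_self]
      · rw [List.idxOf_cons_ne _ hne]
        simp only [List.getElem_cons_succ] at hx
        exact Nat.succ_le_succ (ih (by simpa using h) hx)

theorem idx_map_le {A : Type} [DecidableEq A] (f : Q → A) {l : List Q} {x : Q} (hx : x ∈ l) :
    (l.map f).idxOf (f x) ≤ l.idxOf x := by
  have h : l.idxOf x < l.length := List.idxOf_lt_length_iff.2 hx
  have : (l.map f)[l.idxOf x]'(by simpa using h) = f x := by
    simp [List.getElem_idxOf h]
  exact idx_le_of_getElem (by simpa using h) this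

/-- counting lemma: position in a sublist = number of kept elements before. -/
theorem sublist_idxOf_count {T P : List Q} (hs : T.Sublist P) (hP : P.Nodup)
    {x : Q} (hx : x ∈ T) :
    T.idxOf x = (P.take (P.idxOf x)).countP (fun y => decide (y ∈ T)) := by
  induction hs with
  | slnil => simp at hx
  | @cons l₁ l₂ a hsub ih =>
    have hP' : l₂.Nodup := hP.of_cons
    have hxl₂ : x ∈ l₂ := hsub.mem hx
    have hax : a ≠ x := by rintro rfl; exact (List.nodup_cons.1 hP).1 hxl₂
    rw [List.idxOf_cons_ne _ hax, List.take_succ_cons, List.countP_cons]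
    have haT : a ∉ l₁ := fun h => (List.nodup_cons.1 hP).1 (hsub.mem h)
    simp [haT, ih hP' hx]
  | @cons_cons l₁ l₂ a hsub ih =>
    have hP' : l₂.Nodup := hP.of_cons
    rcases eq_or_ne a x with rfl | hax
    · simp
    · have hxl₁ : x ∈ l₁ := by
        rcases hx with _ | h
        · exact absurd rfl hax
        · assumption
      rw [List.idxOf_cons_ne _ hax, List.idxOf_cons_ne _ hax, List.take_succ_cons,
        List.countP_cons]
      have hcong : (l₂.take (l₂.idxOf x)).countP (fun y => decide (y ∈ a :: l₁)) =
          (l₂.take (l₂.idxOf x)).countP (fun y => decide (y ∈ l₁)) := by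
        apply List.countP_congr
        intro y hy
        have hyl₂ : y ∈ l₂ := List.mem_of_mem_take hy
        have hya : y ≠ a := by rintro rfl; exact (List.nodup_cons.1 hP).1 hyl₂
        simp [List.mem_cons, hya]
      simp only [hcong, ih hP' hxl₁]
      simp [Nat.add_comm]

theorem sublist_idxOf_le {T P : List Q} (hs : T.Sublist P) (hP : P.Nodup)
    {x : Q} (hx : x ∈ T) : T.idxOf x ≤ P.idxOf x := by
  rw [sublist_idxOf_count hs hP hx]
  calc (P.take (P.idxOf x)).countP (fun y => decide (y ∈ T))
      ≤ (P.take (P.idxOf x)).length := List.countP_le_length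
    _ ≤ P.idxOf x := by simp [List.length_take]

/-- if the position is preserved, everything before is kept. -/
theorem sublist_idxOf_gap {T P : List Q} (hs : T.Sublist P) (hP : P.Nodup)
    {x : Q} (hx : x ∈ T) (heq : T.idxOf x = P.idxOf x)
    {y : Q} (hy : y ∈ P) (hlt : P.idxOf y < P.idxOf x) : y ∈ T := by
  have hcount := sublist_idxOf_count hs hP hx
  rw [heq] at hcount
  have hxP : P.idxOf x < P.length := List.idxOf_lt_length_iff.2 (hs.mem hx)
  have hlen : (P.take (P.idxOf x)).length = P.idxOf x := by
    simp [List.length_take, Nat.min_eq_left (le_of_lt hxP)]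
  have hall : ∀ z ∈ P.take (P.idxOf x), z ∈ T := by
    have := (List.countP_eq_length (l := P.take (P.idxOf x))
      (p := fun y => decide (y ∈ T))).1 (by omega)
    intro z hz; simpa using this z hz
  apply hall
  have hyP : P.idxOf y < P.length := List.idxOf_lt_length_iff.2 hy
  have : (P.take (P.idxOf x))[P.idxOf y]'(by omega) = y := by
    rw [List.getElem_take]; exact List.getElem_idxOf hyP
  rw [← this]
  exact List.getElem_mem _


namespace DFAux

abbrev go (acc : List Q) (l : List Q) : List Q :=
  l.foldl (fun acc q => if q ∈ acc then acc else acc ++ [q]) acc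

theorem go_mem : ∀ (l acc : List Q) (x : Q), x ∈ go acc l ↔ x ∈ acc ∨ x ∈ l := by
  intro l
  induction l with
  | nil => simp [go]
  | cons a l ih =>
    intro acc x
    show x ∈ go (if a ∈ acc then acc else acc ++ [a]) l ↔ _
    rw [ih]
    by_cases h : a ∈ acc
    · simp only [h, if_true]
      constructor
      · rintro (h1 | h1)
        · exact Or.inl h1
        · exact Or.inr (List.mem_cons_of_mem _ h1)
      · rintro (h1 | h1)
        · exact Or.inl h1
        · rcases List.mem_cons.1 h1 with rfl | h1
          · exact Or.inl h
          · exact Or.inr h1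
    · simp only [h, if_false, List.mem_append, List.mem_singleton, List.mem_cons]
      tauto

theorem go_prefix : ∀ (l acc : List Q), acc <+: go acc l := by
  intro l
  induction l with
  | nil => intro acc; exact List.prefix_refl _
  | cons a l ih =>
    intro acc
    show acc <+: go (if a ∈ acc then acc else acc ++ [a]) l
    by_cases h : a ∈ acc
    · simpa [h] using ih acc
    · simp only [h, if_false]
      exact (List.prefix_append _ _).trans (ih _)

theorem go_nodup : ∀ (l acc : List Q), acc.Nodup → (go acc l).Nodup := by
  intro l
  induction l with
  | nil => intro acc h; exact h
  | cons a l ih =>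
    intro acc h
    show (go (if a ∈ acc then acc else acc ++ [a]) l).Nodup
    by_cases ha : a ∈ acc
    · simpa [ha] using ih acc h
    · simp only [ha, if_false]
      exact ih _ (by simp [List.nodup_append, h, ha]; rintro b hb rfl; exact ha hb)

theorem go_idxOf_mem (l acc : List Q) (x : Q) (hx : x ∈ acc) :
    (go acc l).idxOf x = acc.idxOf x := by
  obtain ⟨r, hr⟩ := go_prefix l acc
  rw [← hr, List.idxOf_append_of_mem hx]

theorem go_length_le : ∀ (l acc : List Q), (go acc l).length ≤ acc.length + l.length := by
  intro l
  induction l with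
  | nil => simp [go]
  | cons a l ih =>
    intro acc
    show (go (if a ∈ acc then acc else acc ++ [a]) l).length ≤ _
    by_cases ha : a ∈ acc
    · simp only [ha, if_true]
      calc (go acc l).length ≤ acc.length + l.length := ih acc
        _ ≤ acc.length + (a :: l).length := by simp
    · simp only [ha, if_false]
      calc (go (acc ++ [a]) l).length ≤ (acc ++ [a]).length + l.length := ih _
        _ = acc.length + (a :: l).length := by simp; omega

theorem go_length_lt_of_mem : ∀ (l acc : List Q) (x : Q), x ∈ acc → x ∈ l →
    (go acc l).length < acc.length + l.length := by
  intro l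
  induction l with
  | nil => simp
  | cons a l ih =>
    intro acc x hxa hxl
    show (go (if a ∈ acc then acc else acc ++ [a]) l).length < _
    by_cases ha : a ∈ acc
    · simp only [ha, if_true]
      calc (go acc l).length ≤ acc.length + l.length := go_length_le l acc
        _ < acc.length + (a :: l).length := by simp
    · simp only [ha, if_false]
      have hxa' : x ∈ acc ++ [a] := by simp [hxa]
      have hxl' : x ∈ l := by
        rcases hxl with _ | h
        · exact absurd hxa ha
        · assumption
      calc (go (acc ++ [a]) l).length < (acc ++ [a]).length + l.length := ih _ x hxa' hxl'
        _ = acc.length + (a :: l).length := by simp; omega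

theorem go_length_lt_of_dup : ∀ (l acc : List Q), ¬ l.Nodup →
    (go acc l).length < acc.length + l.length := by
  intro l
  induction l with
  | nil => intro acc h; exact absurd List.nodup_nil h
  | cons a l ih =>
    intro acc h
    show (go (if a ∈ acc then acc else acc ++ [a]) l).length < _
    rw [List.nodup_cons, not_and_or, not_not] at h
    by_cases ha : a ∈ acc
    · simp only [ha, if_true]
      calc (go acc l).length ≤ acc.length + l.length := go_length_le l acc
        _ < acc.length + (a :: l).length := by simp
    · simp only [ha, if_false]
      rcases h with h | h
      · calc (go (acc ++ [a]) l).length < (acc ++ [a]).length + l.length :=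
            go_length_lt_of_mem l _ a (by simp) h
          _ = acc.length + (a :: l).length := by simp; omega
      · calc (go (acc ++ [a]) l).length < (acc ++ [a]).length + l.length := ih _ h
          _ = acc.length + (a :: l).length := by simp; omega

theorem go_idxOf_eq : ∀ (l acc : List Q) (x : Q), x ∉ acc → x ∈ l →
    (go acc l).idxOf x = (go acc (l.take (l.idxOf x))).length := by
  intro l
  induction l with
  | nil => simp
  | cons a l ih =>
    intro acc x hxacc hxl
    rcases eq_or_ne x a with rfl | hne
    · rw [List.idxOf_cons_self]
      show (go (if x ∈ acc then acc else acc ++ [x]) l).idxOf x = (go acc []).length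
      simp only [hxacc, if_false]
      rw [go_idxOf_mem _ _ x (by simp), List.idxOf_append_of_notMem hxacc]
      simp [go]
    · have hxl' : x ∈ l := by
        rcases hxl with _ | h
        · exact absurd rfl hne.symm
        · assumption
      rw [List.idxOf_cons_ne _ hne.symm, List.take_succ_cons]
      show (go (if a ∈ acc then acc else acc ++ [a]) l).idxOf x =
        (go (if a ∈ acc then acc else acc ++ [a]) (l.take (l.idxOf x))).length
      by_cases ha : a ∈ acc
      · simp only [ha, if_true]; exact ih acc x hxacc hxl'
      · simp only [ha, if_false]
        exact ih _ x (by simp [hxacc, hne]) hxl'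

end DFAux

theorem dedupFirst_mem {l : List Q} {x : Q} : x ∈ dedupFirst l ↔ x ∈ l := by
  rw [show dedupFirst l = DFAux.go [] l from rfl, DFAux.go_mem]; simp

theorem dedupFirst_nodup (l : List Q) : (dedupFirst l).Nodup :=
  DFAux.go_nodup l [] List.nodup_nil

theorem dedupFirst_idxOf_eq {l : List Q} {x : Q} (hx : x ∈ l) :
    (dedupFirst l).idxOf x = (dedupFirst (l.take (l.idxOf x))).length :=
  DFAux.go_idxOf_eq l [] x (by simp) hx

theorem dedupFirst_length_le (l : List Q) : (dedupFirst l).length ≤ l.length := by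
  simpa [show dedupFirst l = DFAux.go [] l from rfl] using DFAux.go_length_le l []

theorem dedupFirst_length_lt {l : List Q} (h : ¬ l.Nodup) :
    (dedupFirst l).length < l.length := by
  simpa [show dedupFirst l = DFAux.go [] l from rfl] using DFAux.go_length_lt_of_dup l [] h

theorem dedupFirst_idxOf_le {l : List Q} {x : Q} (hx : x ∈ l) :
    (dedupFirst l).idxOf x ≤ l.idxOf x := by
  rw [dedupFirst_idxOf_eq hx]
  calc (dedupFirst (l.take (l.idxOf x))).length ≤ (l.take (l.idxOf x)).length :=
      dedupFirst_length_le _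
    _ ≤ l.idxOf x := by simp

theorem not_mem_take_idxOf {l : List Q} {x : Q} : x ∉ l.take (l.idxOf x) := by
  intro h
  obtain ⟨i, hi, hget⟩ := List.mem_iff_getElem.1 h
  have hlen : i < l.length := by
    have := hi; simp [List.length_take] at this; omega
  rw [List.getElem_take] at hget
  have := idx_le_of_getElem hlen hget
  simp [List.length_take] at hi
  omega

theorem dedupFirst_idxOf_lt {l : List Q} {x y : Q} (hx : x ∈ l) (hy : y ∈ l)
    (hlt : l.idxOf x < l.idxOf y) :
    (dedupFirst l).idxOf x < (dedupFirst l).idxOf y := by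
  rw [dedupFirst_idxOf_eq hx, dedupFirst_idxOf_eq hy]
  have hyl : l.idxOf y < l.length := List.idxOf_lt_length_iff.2 hy
  have htt : (l.take (l.idxOf y)).take (l.idxOf x) = l.take (l.idxOf x) := by
    rw [List.take_take, Nat.min_eq_left (le_of_lt hlt)]
  have hsplit := (List.take_append_drop (l.idxOf x) (l.take (l.idxOf y))).symm
  rw [htt] at hsplit
  have hdrop : (l.take (l.idxOf y)).drop (l.idxOf x) =
      x :: (l.take (l.idxOf y)).drop (l.idxOf x + 1) := by
    rw [List.drop_eq_getElem_cons (by simp [List.length_take]; omega)]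
    congr 1
    rw [List.getElem_take]
    exact List.getElem_idxOf (List.idxOf_lt_length_iff.2 hx)
  rw [hdrop] at hsplit
  rw [hsplit]
  show (dedupFirst (l.take (l.idxOf x))).length <
    (DFAux.go [] (l.take (l.idxOf x) ++ x :: _)).length
  rw [show ∀ (l₁ l₂ : List Q), DFAux.go [] (l₁ ++ l₂) = DFAux.go (DFAux.go [] l₁) l₂ from
    fun l₁ l₂ => List.foldl_append ..]
  set A := DFAux.go [] (l.take (l.idxOf x)) with hA
  have hxA : x ∉ A := by
    rw [hA]
    intro hmem
    rw [DFAux.go_mem] at hmem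
    rcases hmem with h | h
    · simp at h
    · exact not_mem_take_idxOf h
  show A.length < (DFAux.go (if x ∈ A then A else A ++ [x]) _).length
  simp only [hxA, if_false]
  calc A.length < (A ++ [x]).length := by simp
    _ ≤ _ := (DFAux.go_prefix _ _).length_le

theorem dedupFirst_head? {l : List Q} (h : l ≠ []) : (dedupFirst l).head? = l.head? := by
  cases l with
  | nil => exact absurd rfl h
  | cons a l =>
    show (DFAux.go (if a ∈ ([] : List Q) then _ else [] ++ [a]) l).head? = _
    simp only [List.not_mem_nil, if_false, List.nil_append]
    obtain ⟨r, hr⟩ := DFAux.go_prefix l [a]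
    rw [← hr]
    simp

/-- strict monotonicity of positions under sublists. -/
theorem sublist_idxOf_lt {T P : List Q} (hs : T.Sublist P) (hP : P.Nodup)
    {x y : Q} (hx : x ∈ T) (hy : y ∈ T) (hlt : P.idxOf x < P.idxOf y) :
    T.idxOf x < T.idxOf y := by
  have hcx := sublist_idxOf_count hs hP hx
  have hcy := sublist_idxOf_count hs hP hy
  have hyP : P.idxOf y < P.length := List.idxOf_lt_length_iff.2 (hs.mem hy)
  have htt : (P.take (P.idxOf y)).take (P.idxOf x) = P.take (P.idxOf x) := by
    rw [List.take_take, Nat.min_eq_left (le_of_lt hlt)]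
  have hsplit := (List.take_append_drop (P.idxOf x) (P.take (P.idxOf y))).symm
  rw [htt] at hsplit
  have hdrop : (P.take (P.idxOf y)).drop (P.idxOf x) =
      x :: (P.take (P.idxOf y)).drop (P.idxOf x + 1) := by
    rw [List.drop_eq_getElem_cons (by simp [List.length_take]; omega)]
    congr 1
    rw [List.getElem_take]
    exact List.getElem_idxOf (List.idxOf_lt_length_iff.2 (hs.mem hx))
  rw [hdrop] at hsplit
  rw [hsplit, List.countP_append, List.countP_cons] at hcy
  simp only [hx, decide_true, if_true] at hcy
  have hle : (P.take (P.idxOf x)).countP (fun y => decide (y ∈ T)) ≤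
      (P.take (P.idxOf x)).length := List.countP_le_length
  have : (P.take (P.idxOf x)).length ≤ P.idxOf x := by simp
  omega

end ListLemmas


/-- Index of the successor of `q` after the step from level `i` to level `i+1` of the
reduced DAG: if the deterministic successor was removed, its incoming edge is
redirected to the smallest vertex, of index `1`. -/
def succIdxR (t : ℕ → List Q) (δd : Q → A → Q) (w : ℕ → A) (i : ℕ) (q : Q) : ℕ :=
  if δd q (w i) ∈ t (i + 1) then idxL (t (i + 1)) (δd q (w i)) else 1

/-- `Dec` for the reduced DAG: vertices of level `i` whose successor has a strictly
smaller index. -/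
def DecR (t : ℕ → List Q) (δd : Q → A → Q) (w : ℕ → A) (i : ℕ) : Set Q :=
  {q | q ∈ t i ∧ succIdxR t δd w i q < idxL (t i) q}

/-- `Acc` for the reduced DAG: vertices of level `i` that are the source of an
accepting transition on `w(i)`. -/
def AccR (M : LDBA Q A) (t : ℕ → List Q) (δd : Q → A → Q) (w : ℕ → A) (i : ℕ) :
    Set Q :=
  {q | q ∈ t i ∧ M.α q (w i) (δd q (w i))}

open Classical in
/-- The color of the step from level `i` to level `i+1` of the reduced DAG. -/
noncomputable def colorR (M : LDBA Q A) (t : ℕ → List Q) (δd : Q → A → Q)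
    (w : ℕ → A) (i : ℕ) : ℕ :=
  if (DecR t δd w i).Nonempty then
    if (AccR M t δd w i).Nonempty then
      min (2 * sInf (idxL (t i) '' DecR t δd w i) - 1)
        (2 * sInf (idxL (t i) '' AccR M t δd w i))
    else 2 * sInf (idxL (t i) '' DecR t δd w i) - 1
  else if (AccR M t δd w i).Nonempty then
    2 * sInf (idxL (t i) '' AccR M t δd w i)
  else 2 * M.Qd.ncard + 1

/-- The color summary of the reduced DAG: the minimal color occurring infinitely
often. -/
noncomputable def colorSummaryR (M : LDBA Q A) (t : ℕ → List Q) (δd : Q → A → Q)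
    (w : ℕ → A) : ℕ :=
  sInf {c | ∀ N, ∃ i, N ≤ i ∧ colorR M t δd w i = c}

section MainAux

open LDBA in
/-- All hypotheses of the main theorem bundled. -/
structure GoodRed (M : LDBA Q A) (w : ℕ → A) (δd : Q → A → Q) (s : ℕ → Set Q)
    (t pre nw : ℕ → List Q) : Prop where
  hδd : ∀ q ∈ M.Qd, ∀ σ : A, M.δ q σ (δd q σ)
  hs0 : s 0 = {M.q0}
  hss : ∀ i, s (i + 1) = {q' | q' ∉ M.Qd ∧ ∃ q ∈ s i, M.δ q (w i) q'}
  ht0 : t 0 = []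
  hpre0 : pre 0 = []
  hpre : ∀ i, pre (i + 1) = dedupFirst ((t i).map (fun q => δd q (w i))) ++ nw (i + 1)
  hnw_nodup : ∀ i, (nw (i + 1)).Nodup
  hnw_mem : ∀ i q, q ∈ nw (i + 1) ↔ q ∈ M.Qd ∧ (∃ p ∈ s i, M.δ p (w i) q) ∧
      q ∉ (t i).map (fun q => δd q (w i))
  hsub : ∀ i, (t i).Sublist (pre i)
  hhead : ∀ i, (t i).head? = (pre i).head?
  hred : ∀ i, ∀ q ∈ pre i, q ∉ t i →
      Lang M q ⊆ ⋃ q' ∈ {q' | q' ∈ pre i ∧ idxL (pre i) q' < idxL (pre i) q}, Lang M q'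

namespace GoodRed

open LDBA

variable {M : LDBA Q A} {w : ℕ → A} {δd : Q → A → Q} {s : ℕ → Set Q} {t pre nw : ℕ → List Q}
variable (C : GoodRed M w δd s t pre nw)

include C

theorem pre_Qd : ∀ i, ∀ q ∈ pre i, q ∈ M.Qd := by
  intro i
  induction i with
  | zero => rw [C.hpre0]; simp
  | succ i ih =>
    intro q hq
    rw [C.hpre i] at hq
    rcases List.mem_append.1 hq with h | h
    · rw [dedupFirst_mem] at h
      obtain ⟨x, hx, rfl⟩ := List.mem_map.1 h
      have hxQ : x ∈ M.Qd := ih x ((C.hsub i).subset hx)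
      exact M.trap x hxQ (w i) _ (C.hδd x hxQ (w i))
    · exact ((C.hnw_mem i q).1 h).1

theorem t_Qd : ∀ i, ∀ q ∈ t i, q ∈ M.Qd := fun i q hq => C.pre_Qd i q ((C.hsub i).subset hq)

theorem pre_nodup : ∀ i, (pre i).Nodup := by
  intro i
  cases i with
  | zero => rw [C.hpre0]; exact List.nodup_nil
  | succ i =>
    rw [C.hpre i]
    rw [List.nodup_append]
    refine ⟨dedupFirst_nodup _, C.hnw_nodup i, ?_⟩
    intro x hx _ hx' rfl
    rw [dedupFirst_mem] at hx
    exact ((C.hnw_mem i x).1 hx').2.2 hx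

theorem t_nodup (i : ℕ) : (t i).Nodup := (C.pre_nodup i).sublist (C.hsub i)

theorem t_len (i : ℕ) [Fintype Q] : (t i).length ≤ M.Qd.ncard := by
  classical
  rw [← List.toFinset_card_of_nodup (C.t_nodup i)]
  rw [Set.ncard_eq_toFinset_card' M.Qd]
  apply Finset.card_le_card
  intro x hx
  simp only [List.mem_toFinset] at hx
  simp only [Set.mem_toFinset]
  exact C.t_Qd i x hx

/-- The successor of a kept vertex is in `pre (i+1)` at a position `≤` its own. -/
theorem succ_mem_pre {i : ℕ} {q : Q} (hq : q ∈ t i) :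
    δd q (w i) ∈ pre (i + 1) ∧ idxL (pre (i + 1)) (δd q (w i)) ≤ idxL (t i) q := by
  have hmap : δd q (w i) ∈ (t i).map (fun q => δd q (w i)) :=
    List.mem_map.2 ⟨q, hq, rfl⟩
  have hD : δd q (w i) ∈ dedupFirst ((t i).map (fun q => δd q (w i))) := dedupFirst_mem.2 hmap
  constructor
  · rw [C.hpre i]; exact List.mem_append_left _ hD
  · show (pre (i+1)).idxOf _ + 1 ≤ (t i).idxOf q + 1
    rw [C.hpre i, List.idxOf_append_of_mem hD]
    have h1 := dedupFirst_idxOf_le hmap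
    have h2 : ((t i).map (fun q => δd q (w i))).idxOf (δd q (w i)) ≤ (t i).idxOf q :=
      idx_map_le (fun q => δd q (w i)) hq
    omega

theorem idx_t_le_pre {i : ℕ} {q : Q} (hq : q ∈ t i) : idxL (t i) q ≤ idxL (pre i) q := by
  have := sublist_idxOf_le (C.hsub i) (C.pre_nodup i) hq
  simp only [idxL]; omega

theorem mem_t_of_head {i : ℕ} {q : Q} (hq : (pre i).head? = some q) :
    q ∈ t i ∧ idxL (t i) q = 1 := by
  have h := C.hhead i
  rw [hq] at h
  have hmem : q ∈ t i := by
    cases ht : t i with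
    | nil => rw [ht] at h; simp at h
    | cons a l => rw [ht] at h; simp at h; simp [h]
  refine ⟨hmem, ?_⟩
  cases ht : t i with
  | nil => rw [ht] at hmem; simp at hmem
  | cons a l =>
    rw [ht] at h; simp at h
    simp [idxL, ht, h, List.idxOf_cons_self]

/-- The successor of the head is the head of the next level. -/
theorem head_succ {i : ℕ} {q : Q} (hq : q ∈ t i) (h1 : idxL (t i) q = 1) :
    δd q (w i) ∈ t (i + 1) ∧ idxL (t (i + 1)) (δd q (w i)) = 1 := by
  have hne : t i ≠ [] := List.ne_nil_of_mem hq
  have hhd : (t i).head? = some q := by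
    cases ht : t i with
    | nil => exact absurd ht hne
    | cons a l =>
      simp only [List.head?_cons, Option.some_inj]
      have : (t i).idxOf q = 0 := by simp [idxL] at h1; omega
      rw [ht] at this
      by_contra hne'
      rw [List.idxOf_cons_ne _ hne'] at this
      omega
  have hmapne : (t i).map (fun q => δd q (w i)) ≠ [] := by
    cases ht : t i with
    | nil => exact absurd ht hne
    | cons a l => simp
  have hmaphd : ((t i).map (fun q => δd q (w i))).head? = some (δd q (w i)) := by
    cases ht : t i with
    | nil => exact absurd ht hne
    | cons a l =>
      rw [ht] at hhd; simp at hhd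
      simp [ht, hhd]
  have hDhd : (dedupFirst ((t i).map (fun q => δd q (w i)))).head? = some (δd q (w i)) := by
    rw [dedupFirst_head? (by simpa using hmapne)]; exact hmaphd
  have hprehd : (pre (i + 1)).head? = some (δd q (w i)) := by
    rw [C.hpre i]
    cases hD : dedupFirst ((t i).map (fun q => δd q (w i))) with
    | nil => rw [hD] at hDhd; simp at hDhd
    | cons a l => rw [hD] at hDhd; simp at hDhd; simp [hD, hDhd]
  exact C.mem_t_of_head hprehd

end GoodRed

section Pigeon

theorem eventually_ge {f : ℕ → ℕ} :
    ∀ (c₀ : ℕ), (∀ c, c < c₀ → ∃ N, ∀ i, N ≤ i → f i ≠ c) → ∃ N, ∀ i, N ≤ i → c₀ ≤ f i := by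
  intro c₀
  induction c₀ with
  | zero => intro _; exact ⟨0, fun i _ => Nat.zero_le _⟩
  | succ c ih =>
    intro h
    obtain ⟨N₁, hN₁⟩ := ih (fun c' hc' => h c' (Nat.lt_succ_of_lt hc'))
    obtain ⟨N₂, hN₂⟩ := h c (Nat.lt_succ_self c)
    refine ⟨max N₁ N₂, fun i hi => ?_⟩
    have h1 := hN₁ i (le_trans (le_max_left _ _) hi)
    have h2 := hN₂ i (le_trans (le_max_right _ _) hi)
    omega

theorem infly_pigeon {f : ℕ → ℕ} {B : ℕ} (h : ∀ N, ∃ i, N ≤ i ∧ f i ≤ B) :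
    ∃ c, c ≤ B ∧ ∀ N, ∃ i, N ≤ i ∧ f i = c := by
  by_contra hc
  push_neg at hc
  have hc' : ∀ c, c ≤ B → ∃ N, ∀ i, N ≤ i → f i ≠ c := by
    intro c hcB
    exact hc c hcB
  have hall : ∀ c, c < B + 1 → ∃ N, ∀ i, N ≤ i → f i ≠ c := fun c hczz => hc' c (by omega)
  obtain ⟨N, hN⟩ := eventually_ge (B + 1) hall
  obtain ⟨i, hi, hfi⟩ := h N
  have := hN i hi
  omega

end Pigeon

namespace GoodRed

open LDBA

variable {M : LDBA Q A} {w : ℕ → A} {δd : Q → A → Q} {s : ℕ → Set Q} {t pre nw : ℕ → List Q}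
variable (C : GoodRed M w δd s t pre nw)

theorem runPrefix_extend {ρ : ℕ → Q} {i : ℕ} (h : IsRunPrefix M w ρ i) {q' : Q}
    (hδ : M.δ (ρ i) (w i) q') : ∃ ρ', IsRunPrefix M w ρ' (i + 1) ∧ ρ' (i + 1) = q' := by
  refine ⟨fun j => if j ≤ i then ρ j else q', ⟨?_, ?_⟩, by simp⟩
  · simp [h.1]
  · intro j hj
    rcases Nat.lt_or_ge j i with hji | hji
    · simp only [le_of_lt hji, if_true, Nat.succ_le_of_lt hji, if_true]
      exact h.2 j hji
    · have hji' : j = i := by omega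
      subst hji'
      simp only [le_refl, if_true, Nat.not_le.2 (Nat.lt_succ_self j), if_neg]
      simpa using hδ

include C

theorem s_reach : ∀ i, ∀ q ∈ s i, ∃ ρ, IsRunPrefix M w ρ i ∧ ρ i = q := by
  intro i
  induction i with
  | zero =>
    intro q hq
    rw [C.hs0] at hq
    rcases hq with rfl
    exact ⟨fun _ => M.q0, ⟨rfl, fun i h => absurd h (Nat.not_lt_zero i)⟩, rfl⟩
  | succ i ih =>
    intro q hq
    rw [C.hss i] at hq
    obtain ⟨-, p, hp, hδ⟩ := hq
    obtain ⟨ρ, hρ, hρi⟩ := ih p hp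
    obtain ⟨ρ', hρ', hρ'i⟩ := runPrefix_extend hρ (by rw [hρi]; exact hδ)
    exact ⟨ρ', hρ', hρ'i⟩

theorem pre_reach : ∀ i, ∀ q ∈ pre i, ∃ ρ, IsRunPrefix M w ρ i ∧ ρ i = q := by
  intro i
  induction i with
  | zero => intro q hq; rw [C.hpre0] at hq; simp at hq
  | succ i ih =>
    intro q hq
    rw [C.hpre i] at hq
    rcases List.mem_append.1 hq with h | h
    · rw [dedupFirst_mem] at h
      obtain ⟨x, hx, rfl⟩ := List.mem_map.1 h
      have hxp : x ∈ pre i := (C.hsub i).subset hx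
      obtain ⟨ρ, hρ, hρi⟩ := ih x hxp
      have hxQ : x ∈ M.Qd := C.pre_Qd i x hxp
      exact runPrefix_extend hρ (by rw [hρi]; exact C.hδd x hxQ (w i))
    · obtain ⟨-, ⟨p, hp, hδ⟩, -⟩ := (C.hnw_mem i q).1 h
      obtain ⟨ρ, hρ, hρi⟩ := C.s_reach i p hp
      exact runPrefix_extend hρ (by rw [hρi]; exact hδ)

theorem forced {n : ℕ} {q : Q} (hq : q ∈ M.Qd) {ρ : ℕ → Q} (h0 : ρ 0 = q)
    (hstep : ∀ j, M.δ (ρ j) (w (n + j)) (ρ (j + 1))) :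
    ∀ j, ρ j ∈ M.Qd ∧ ρ (j + 1) = δd (ρ j) (w (n + j)) := by
  intro j
  induction j with
  | zero =>
    refine ⟨h0 ▸ hq, ?_⟩
    exact M.det (ρ 0) (h0 ▸ hq) (w (n + 0)) _ _ (hstep 0) (C.hδd (ρ 0) (h0 ▸ hq) (w (n + 0)))
  | succ j ih =>
    have hQd : ρ (j + 1) ∈ M.Qd := ih.2 ▸ M.trap (ρ j) ih.1 (w (n + j)) _ (ih.2 ▸ hstep j)
    refine ⟨hQd, ?_⟩
    exact M.det (ρ (j + 1)) hQd (w (n + (j + 1))) _ _ (hstep (j + 1))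
      (C.hδd (ρ (j + 1)) hQd (w (n + (j + 1))))

theorem lang_step {n : ℕ} {q : Q} (hq : q ∈ M.Qd)
    (hL : (fun k => w (n + k)) ∈ Lang M q) :
    (fun k => w ((n + 1) + k)) ∈ Lang M (δd q (w n)) := by
  obtain ⟨ρ, h0, hstep, hacc⟩ := hL
  have hforced := C.forced hq h0 (fun j => hstep j)
  refine ⟨fun j => ρ (j + 1), ?_, ?_, ?_⟩
  · have := (hforced 0).2
    rw [h0] at this
    simpa using this
  · intro j
    have := hstep (j + 1)
    show M.δ (ρ (j + 1)) (w (n + 1 + j)) (ρ (j + 1 + 1))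
    rwa [show n + 1 + j = n + (j + 1) by omega]
  · intro N
    obtain ⟨i, hi, hα⟩ := hacc (N + 1)
    refine ⟨i - 1, by omega, ?_⟩
    show M.α (ρ (i - 1 + 1)) (w (n + 1 + (i - 1))) (ρ (i - 1 + 1 + 1))
    rw [show i - 1 + 1 = i by omega, show n + 1 + (i - 1) = n + i by omega]
    exact hα

theorem lang_chain {n : ℕ} {q : Q} (hq : q ∈ M.Qd)
    (hL : (fun k => w (n + k)) ∈ Lang M q) {g : ℕ → Q} (hg0 : g 0 = q)
    (hgs : ∀ j, g (j + 1) = δd (g j) (w (n + j))) :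
    (∀ j, g j ∈ M.Qd) ∧ ∀ N, ∃ j, N ≤ j ∧ M.α (g j) (w (n + j)) (g (j + 1)) := by
  obtain ⟨ρ, h0, hstep, hacc⟩ := hL
  have hforced := C.forced hq h0 (fun j => hstep j)
  have heq : ∀ j, ρ j = g j := by
    intro j
    induction j with
    | zero => rw [h0, hg0]
    | succ j ih => rw [(hforced j).2, ih, hgs j]
  constructor
  · intro j; rw [← heq j]; exact (hforced j).1
  · intro N
    obtain ⟨i, hi, hα⟩ := hacc N
    refine ⟨i, hi, ?_⟩
    rw [← heq i, ← heq (i + 1)]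
    exact hα

end GoodRed

namespace GoodRed

open LDBA

variable {M : LDBA Q A} {w : ℕ → A} {δd : Q → A → Q} {s : ℕ → Set Q} {t pre nw : ℕ → List Q}
variable (C : GoodRed M w δd s t pre nw)

theorem idxL_pos (l : List Q) (q : Q) : 1 ≤ idxL l q := by simp [idxL]

theorem idxL_le_len {l : List Q} {q : Q} (h : q ∈ l) : idxL l q ≤ l.length := by
  have := List.idxOf_lt_length_iff.2 h
  simp only [idxL]; omega

theorem sInf_idx_attained {S : Set Q} (hS : S.Nonempty) (i : ℕ) :
    ∃ q ∈ S, idxL (t i) q = sInf (idxL (t i) '' S) := by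
  have hne : (idxL (t i) '' S).Nonempty := hS.image _
  obtain ⟨q, hq, hqe⟩ := Nat.sInf_mem hne
  exact ⟨q, hq, hqe⟩

theorem colorR_dec_nonempty {i : ℕ} (h1 : (DecR t δd w i).Nonempty) :
    colorR M t δd w i ≤ 2 * sInf (idxL (t i) '' DecR t δd w i) - 1 := by
  by_cases h2 : (AccR M t δd w i).Nonempty
  · have : colorR M t δd w i = min (2 * sInf (idxL (t i) '' DecR t δd w i) - 1)
        (2 * sInf (idxL (t i) '' AccR M t δd w i)) := by
      unfold colorR; rw [if_pos h1, if_pos h2]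
    rw [this]; exact min_le_left _ _
  · have : colorR M t δd w i = 2 * sInf (idxL (t i) '' DecR t δd w i) - 1 := by
      unfold colorR; rw [if_pos h1, if_neg h2]
    omega

theorem colorR_acc_nonempty {i : ℕ} (h2 : (AccR M t δd w i).Nonempty) :
    colorR M t δd w i ≤ 2 * sInf (idxL (t i) '' AccR M t δd w i) := by
  by_cases h1 : (DecR t δd w i).Nonempty
  · have : colorR M t δd w i = min (2 * sInf (idxL (t i) '' DecR t δd w i) - 1)
        (2 * sInf (idxL (t i) '' AccR M t δd w i)) := by
      unfold colorR; rw [if_pos h1, if_pos h2]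
    rw [this]; exact min_le_right _ _
  · have : colorR M t δd w i = 2 * sInf (idxL (t i) '' AccR M t δd w i) := by
      unfold colorR; rw [if_neg h1, if_pos h2]
    omega

theorem colorR_le_acc {i : ℕ} {q : Q} (hq : q ∈ AccR M t δd w i) :
    colorR M t δd w i ≤ 2 * idxL (t i) q := by
  have hsInf : sInf (idxL (t i) '' AccR M t δd w i) ≤ idxL (t i) q :=
    Nat.sInf_le ⟨q, hq, rfl⟩
  have := colorR_acc_nonempty (M := M) (t := t) (δd := δd) (w := w) ⟨q, hq⟩
  omega

theorem colorR_le_dec {i : ℕ} {q : Q} (hq : q ∈ DecR t δd w i) :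
    colorR M t δd w i ≤ 2 * idxL (t i) q - 1 := by
  have hsInf : sInf (idxL (t i) '' DecR t δd w i) ≤ idxL (t i) q :=
    Nat.sInf_le ⟨q, hq, rfl⟩
  have := colorR_dec_nonempty (M := M) (t := t) (δd := δd) (w := w) ⟨q, hq⟩
  omega

include C in
theorem colorR_bound [Fintype Q] (i : ℕ) :
    colorR M t δd w i ≤ 2 * M.Qd.ncard + 1 := by
  have hlen := C.t_len i
  by_cases h1 : (DecR t δd w i).Nonempty
  · obtain ⟨q, hq, hqe⟩ := sInf_idx_attained (t := t) (S := DecR t δd w i) h1 i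
    have h2 := idxL_le_len (show q ∈ t i from hq.1)
    have h3 := colorR_dec_nonempty (M := M) (δd := δd) (w := w) h1
    omega
  · by_cases h2 : (AccR M t δd w i).Nonempty
    · obtain ⟨q, hq, hqe⟩ := sInf_idx_attained (t := t) (S := AccR M t δd w i) h2 i
      have h3 := idxL_le_len (show q ∈ t i from hq.1)
      have h4 := colorR_acc_nonempty (t := t) (δd := δd) h2
      omega
    · have : colorR M t δd w i = 2 * M.Qd.ncard + 1 := by
        unfold colorR; rw [if_neg h1, if_neg h2]
      omega

theorem colorR_even_acc {i c : ℕ} (hc : colorR M t δd w i = c) (hev : Even c) :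
    ∃ q ∈ AccR M t δd w i, 2 * idxL (t i) q = c := by
  rw [Nat.even_iff] at hev
  by_cases h1 : (DecR t δd w i).Nonempty <;> by_cases h2 : (AccR M t δd w i).Nonempty
  · have hmin : colorR M t δd w i = min (2 * sInf (idxL (t i) '' DecR t δd w i) - 1)
        (2 * sInf (idxL (t i) '' AccR M t δd w i)) := by
      unfold colorR; rw [if_pos h1, if_pos h2]
    rcases min_choice (2 * sInf (idxL (t i) '' DecR t δd w i) - 1)
      (2 * sInf (idxL (t i) '' AccR M t δd w i)) with hch | hch <;>
      rw [hmin, hch] at hc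
    · obtain ⟨q, hq, hqe⟩ := sInf_idx_attained (t := t) (S := DecR t δd w i) h1 i
      have := idxL_pos (t i) q
      omega
    · obtain ⟨q, hq, hqe⟩ := sInf_idx_attained (t := t) (S := AccR M t δd w i) h2 i
      exact ⟨q, hq, by omega⟩
  · have heq : colorR M t δd w i = 2 * sInf (idxL (t i) '' DecR t δd w i) - 1 := by
      unfold colorR; rw [if_pos h1, if_neg h2]
    rw [heq] at hc
    obtain ⟨q, hq, hqe⟩ := sInf_idx_attained (t := t) (S := DecR t δd w i) h1 i
    have := idxL_pos (t i) q
    omega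
  · have heq : colorR M t δd w i = 2 * sInf (idxL (t i) '' AccR M t δd w i) := by
      unfold colorR; rw [if_neg h1, if_pos h2]
    rw [heq] at hc
    obtain ⟨q, hq, hqe⟩ := sInf_idx_attained (t := t) (S := AccR M t δd w i) h2 i
    exact ⟨q, hq, by omega⟩
  · have heq : colorR M t δd w i = 2 * M.Qd.ncard + 1 := by
      unfold colorR; rw [if_neg h1, if_neg h2]
    omega

theorem colorR_odd_dec {i c : ℕ} (hc : colorR M t δd w i = c) (hodd : ¬ Even c)
    (hne : c ≠ 2 * M.Qd.ncard + 1) :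
    ∃ q ∈ DecR t δd w i, 2 * idxL (t i) q - 1 = c := by
  rw [Nat.even_iff] at hodd
  by_cases h1 : (DecR t δd w i).Nonempty <;> by_cases h2 : (AccR M t δd w i).Nonempty
  · have hmin : colorR M t δd w i = min (2 * sInf (idxL (t i) '' DecR t δd w i) - 1)
        (2 * sInf (idxL (t i) '' AccR M t δd w i)) := by
      unfold colorR; rw [if_pos h1, if_pos h2]
    rcases min_choice (2 * sInf (idxL (t i) '' DecR t δd w i) - 1)
      (2 * sInf (idxL (t i) '' AccR M t δd w i)) with hch | hch <;>
      rw [hmin, hch] at hc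
    · obtain ⟨q, hq, hqe⟩ := sInf_idx_attained (t := t) (S := DecR t δd w i) h1 i
      exact ⟨q, hq, by omega⟩
    · omega
  · have heq : colorR M t δd w i = 2 * sInf (idxL (t i) '' DecR t δd w i) - 1 := by
      unfold colorR; rw [if_pos h1, if_neg h2]
    rw [heq] at hc
    obtain ⟨q, hq, hqe⟩ := sInf_idx_attained (t := t) (S := DecR t δd w i) h1 i
    exact ⟨q, hq, by omega⟩
  · have heq : colorR M t δd w i = 2 * sInf (idxL (t i) '' AccR M t δd w i) := by
      unfold colorR; rw [if_neg h1, if_pos h2]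
    rw [heq] at hc
    omega
  · have heq : colorR M t δd w i = 2 * M.Qd.ncard + 1 := by
      unfold colorR; rw [if_neg h1, if_neg h2]
    omega

include C in
/-- If no vertex of index `≤ k` decreases at level `i`, then each vertex of index `≤ k`
has its deterministic successor kept at the same index. -/
theorem stable {i k : ℕ} (hnd : ∀ q ∈ DecR t δd w i, ¬ (idxL (t i) q ≤ k))
    {q : Q} (hq : q ∈ t i) (hle : idxL (t i) q ≤ k) :
    δd q (w i) ∈ t (i + 1) ∧ idxL (t (i + 1)) (δd q (w i)) = idxL (t i) q := by
  have hns : ¬ succIdxR t δd w i q < idxL (t i) q := fun h => hnd q ⟨hq, h⟩ hle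
  by_cases hr : δd q (w i) ∈ t (i + 1)
  · refine ⟨hr, ?_⟩
    have h1 : succIdxR t δd w i q = idxL (t (i + 1)) (δd q (w i)) := by
      unfold succIdxR; rw [if_pos hr]
    have h2 := C.idx_t_le_pre hr
    have h3 := (C.succ_mem_pre hq).2
    omega
  · have h1 : succIdxR t δd w i q = 1 := by
      unfold succIdxR; rw [if_neg hr]
    have hp := idxL_pos (t i) q
    have hq1 : idxL (t i) q = 1 := by omega
    exact absurd (C.head_succ hq hq1).1 hr

end GoodRed

namespace GoodRed

open LDBA

variable {M : LDBA Q A} {w : ℕ → A} {δd : Q → A → Q} {s : ℕ → Set Q} {t pre nw : ℕ → List Q}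
variable (C : GoodRed M w δd s t pre nw)

include C in
/-- Key lemma: if the trace vertex `q` at index `m` keeps index `m` at the next level,
then no vertex of index `d ≤ m` can decrease at this level (provided all positions
`< d` are stable). -/
theorem nodrop {i d m : ℕ} {q v : Q}
    (hq : q ∈ t i) (hm : idxL (t i) q = m)
    (hrt : δd q (w i) ∈ t (i + 1)) (hrm : idxL (t (i + 1)) (δd q (w i)) = m)
    (hv : v ∈ DecR t δd w i) (hd : idxL (t i) v = d) (hdm : d ≤ m)
    (hstab : ∀ u ∈ t i, idxL (t i) u < d →
      δd u (w i) ∈ t (i + 1) ∧ idxL (t (i + 1)) (δd u (w i)) = idxL (t i) u) :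
    False := by
  obtain ⟨hvt, hsix⟩ := hv
  have hd1 : 1 ≤ d := hd ▸ idxL_pos (t i) v
  have hm1 : 1 ≤ m := le_trans hd1 hdm
  rcases eq_or_lt_of_le hdm with rfl | hdm'
  · -- d = m : the decreasing vertex is the trace vertex itself
    have hvq : v = q := by
      have hidx : (t i).idxOf v = (t i).idxOf q := by
        simp only [idxL] at hd hm; omega
      exact (List.idxOf_inj hvt).1 hidx
    subst hvq
    have hs : succIdxR t δd w i v = idxL (t (i + 1)) (δd v (w i)) := by
      unfold succIdxR; rw [if_pos hrt]
    rw [hs, hrm] at hsix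
    omega
  · -- d < m
    have hsp := C.succ_mem_pre hq
    have h1 := C.idx_t_le_pre hrt
    have hPm : idxL (pre (i + 1)) (δd q (w i)) = m := by omega
    -- abbreviations
    have hqi : (t i).idxOf q = m - 1 := by simp only [idxL] at hm; omega
    have hqlen : m - 1 < (t i).length := hqi ▸ List.idxOf_lt_length_iff.2 hq
    have hvi : (t i).idxOf v = d - 1 := by simp only [idxL] at hd; omega
    have hvlen : d - 1 < (t i).length := hvi ▸ List.idxOf_lt_length_iff.2 hvt
    have hM'len : ((t i).map (fun x => δd x (w i))).length = (t i).length := by simp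
    -- r ∈ dedupFirst M' and its index there
    have hrmap : δd q (w i) ∈ (t i).map (fun x => δd x (w i)) := List.mem_map.2 ⟨q, hq, rfl⟩
    have hrD : δd q (w i) ∈ dedupFirst ((t i).map (fun x => δd x (w i))) := dedupFirst_mem.2 hrmap
    have hPD : (pre (i + 1)).idxOf (δd q (w i)) =
        (dedupFirst ((t i).map (fun x => δd x (w i)))).idxOf (δd q (w i)) := by
      rw [C.hpre i, List.idxOf_append_of_mem hrD]
    have hDm : (dedupFirst ((t i).map (fun x => δd x (w i)))).idxOf (δd q (w i)) = m - 1 := by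
      simp only [idxL] at hPm; omega
    -- index of r in M' is exactly m - 1
    have hM'r_le : ((t i).map (fun x => δd x (w i))).idxOf (δd q (w i)) ≤ m - 1 := by
      apply idx_le_of_getElem (by omega)
      rw [List.getElem_map]
      congr 1
      have h := List.getElem_idxOf (xs := t i) (List.idxOf_lt_length_iff.2 hq)
      simp only [hqi] at h
      exact h
    have hDle := dedupFirst_idxOf_le hrmap
    have hM'r : ((t i).map (fun x => δd x (w i))).idxOf (δd q (w i)) = m - 1 := by omega
    -- index of s' = δd v (w i) in M' is ≤ d - 1
    have hsmap : δd v (w i) ∈ (t i).map (fun x => δd x (w i)) := List.mem_map.2 ⟨v, hvt, rfl⟩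
    have hM's_le : ((t i).map (fun x => δd x (w i))).idxOf (δd v (w i)) ≤ d - 1 := by
      apply idx_le_of_getElem (by omega)
      rw [List.getElem_map]
      congr 1
      have h := List.getElem_idxOf (xs := t i) (List.idxOf_lt_length_iff.2 hvt)
      simp only [hvi] at h
      exact h
    -- strict order in dedupFirst, hence in pre
    have hstrict := dedupFirst_idxOf_lt hsmap hrmap (by omega)
    have hsD : δd v (w i) ∈ dedupFirst ((t i).map (fun x => δd x (w i))) := dedupFirst_mem.2 hsmap
    have hsP : δd v (w i) ∈ pre (i + 1) := by
      rw [C.hpre i]; exact List.mem_append_left _ hsD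
    have hsPidx : (pre (i + 1)).idxOf (δd v (w i)) =
        (dedupFirst ((t i).map (fun x => δd x (w i)))).idxOf (δd v (w i)) := by
      rw [C.hpre i, List.idxOf_append_of_mem hsD]
    have hsPlt : (pre (i + 1)).idxOf (δd v (w i)) < (pre (i + 1)).idxOf (δd q (w i)) := by
      omega
    -- s' is kept in t (i+1)
    have hTeqP : (t (i + 1)).idxOf (δd q (w i)) = (pre (i + 1)).idxOf (δd q (w i)) := by
      simp only [idxL] at hrm hPm; omega
    have hsT : δd v (w i) ∈ t (i + 1) :=
      sublist_idxOf_gap (C.hsub (i + 1)) (C.pre_nodup (i + 1)) hrt hTeqP hsP hsPlt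
    -- its index p' is < d
    have hsuc : succIdxR t δd w i v = idxL (t (i + 1)) (δd v (w i)) := by
      unfold succIdxR; rw [if_pos hsT]
    have hp'lt : idxL (t (i + 1)) (δd v (w i)) < d := by omega
    have hp'1 : 1 ≤ idxL (t (i + 1)) (δd v (w i)) := idxL_pos _ _
    -- the vertex u at position p' - 1 in t i
    have hulen : idxL (t (i + 1)) (δd v (w i)) - 1 < (t i).length := by omega
    set u : Q := (t i)[idxL (t (i + 1)) (δd v (w i)) - 1]'hulen with hu
    have hut : u ∈ t i := List.getElem_mem _
    have huidx : idxL (t i) u = idxL (t (i + 1)) (δd v (w i)) := by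
      simp only [idxL, hu, List.Nodup.idxOf_getElem (C.t_nodup i)]
      omega
    have hstabu := hstab u hut (by omega)
    -- δd u (w i) and δd v (w i) occupy the same position in t (i+1)
    have hfu : δd u (w i) = δd v (w i) := by
      apply (List.idxOf_inj hstabu.1).1
      have := hstabu.2
      rw [huidx] at this
      simp only [idxL] at this ⊢
      omega
    -- duplicate entries in the prefix of M'
    have hune : u ≠ v := by
      intro h
      rw [h, hd] at huidx
      omega
    have huM' : ((t i).map (fun x => δd x (w i)))[idxL (t (i + 1)) (δd v (w i)) - 1]'(by omega) =
        δd v (w i) := by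
      rw [List.getElem_map]; exact hfu
    have hvM' : ((t i).map (fun x => δd x (w i)))[d - 1]'(by omega) = δd v (w i) := by
      rw [List.getElem_map]
      congr 1
      have h := List.getElem_idxOf (xs := t i) (List.idxOf_lt_length_iff.2 hvt)
      simp only [hvi] at h
      exact h
    have htake_len : (((t i).map (fun x => δd x (w i))).take (m - 1)).length = m - 1 := by
      simp only [List.length_take]
      omega
    have hdup : ¬ (((t i).map (fun x => δd x (w i))).take (m - 1)).Nodup := by
      intro hnd
      have e1 : (((t i).map (fun x => δd x (w i))).take (m - 1))[idxL (t (i + 1)) (δd v (w i)) - 1]'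
          (by omega) = δd v (w i) := by
        rw [List.getElem_take]; exact huM'
      have e2 : (((t i).map (fun x => δd x (w i))).take (m - 1))[d - 1]'(by omega) = δd v (w i) := by
        rw [List.getElem_take]; exact hvM'
      have i1 := List.Nodup.idxOf_getElem hnd _ (htake_len ▸ (by omega : idxL (t (i + 1)) (δd v (w i)) - 1 < m - 1))
      have i2 := List.Nodup.idxOf_getElem hnd _ (htake_len ▸ (by omega : d - 1 < m - 1))
      rw [e1] at i1
      rw [e2] at i2
      omega
    -- the dedup index of r is then < m - 1, contradiction
    have hkey := dedupFirst_idxOf_eq hrmap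
    rw [hM'r] at hkey
    have hlt := dedupFirst_length_lt hdup
    omega

end GoodRed

namespace GoodRed

open LDBA

variable {M : LDBA Q A} {w : ℕ → A} {δd : Q → A → Q} {s : ℕ → Set Q} {t pre nw : ℕ → List Q}
variable (C : GoodRed M w δd s t pre nw)

include C in
theorem pick {i : ℕ} : ∀ (n : ℕ) (x : Q), x ∈ pre i → idxL (pre i) x = n →
    (fun k => w (i + k)) ∈ Lang M x →
    ∃ y ∈ t i, (fun k => w (i + k)) ∈ Lang M y ∧ idxL (pre i) y ≤ idxL (pre i) x := by
  intro n
  induction n using Nat.strong_induction_on with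
  | _ n ih =>
    intro x hx hxn hL
    by_cases hxt : x ∈ t i
    · exact ⟨x, hxt, hL, le_refl _⟩
    · have hsub := C.hred i x hx hxt hL
      rw [Set.mem_iUnion₂] at hsub
      obtain ⟨y, ⟨hy, hylt⟩, hyL⟩ := hsub
      obtain ⟨z, hz, hzL, hzle⟩ := ih (idxL (pre i) y) (by omega) y hy rfl hyL
      exact ⟨z, hz, hzL, by omega⟩

include C in
theorem trace_exists {n : ℕ} {q' : Q} (h0 : q' ∈ t n)
    (hL0 : (fun k => w (n + k)) ∈ Lang M q') :
    ∃ g : ℕ → Q, g 0 = q' ∧ (∀ j, g j ∈ t (n + j)) ∧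
      (∀ j, (fun k => w ((n + j) + k)) ∈ Lang M (g j)) ∧
      (∀ j, idxL (t (n + j + 1)) (g (j + 1)) ≤ idxL (t (n + j)) (g j)) ∧
      (∀ j, δd (g j) (w (n + j)) ∈ t (n + j + 1) → g (j + 1) = δd (g j) (w (n + j))) ∧
      (∀ j, δd (g j) (w (n + j)) ∉ t (n + j + 1) →
        idxL (t (n + j + 1)) (g (j + 1)) < idxL (t (n + j)) (g j)) := by
  classical
  set P : ℕ → Q → Prop := fun j q => q ∈ t (n + j) ∧ (fun k => w ((n + j) + k)) ∈ Lang M q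
    with hP
  have hstep : ∀ j q, P j q → ∃ q'', P (j + 1) q'' ∧
      idxL (t (n + j + 1)) q'' ≤ idxL (t (n + j)) q ∧
      (δd q (w (n + j)) ∈ t (n + j + 1) → q'' = δd q (w (n + j))) ∧
      (δd q (w (n + j)) ∉ t (n + j + 1) →
        idxL (t (n + j + 1)) q'' < idxL (t (n + j)) q) := by
    rintro j q ⟨hq, hL⟩
    have hQd : q ∈ M.Qd := C.t_Qd (n + j) q hq
    have hrL0 := C.lang_step hQd hL
    have hrL : (fun k => w ((n + (j + 1)) + k)) ∈ Lang M (δd q (w (n + j))) := by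
      rwa [show n + (j + 1) = (n + j) + 1 by omega]
    have hsp := C.succ_mem_pre hq
    by_cases hrt : δd q (w (n + j)) ∈ t (n + j + 1)
    · refine ⟨δd q (w (n + j)), ⟨?_, ?_⟩, ?_, fun _ => rfl, fun h => absurd hrt h⟩
      · rwa [show n + (j + 1) = n + j + 1 by omega]
      · rwa [show n + (j + 1) = n + j + 1 by omega] 
      · exact le_trans (C.idx_t_le_pre hrt) hsp.2
    · have hrL' : (fun k => w ((n + j + 1) + k)) ∈ Lang M (δd q (w (n + j))) := by
        rwa [show n + (j + 1) = n + j + 1 by omega] at hrL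
      obtain ⟨y, hy, hyL, hyle⟩ := C.pick (i := n + j + 1) (idxL (pre (n + j + 1)) (δd q (w (n + j))))
        (δd q (w (n + j))) hsp.1 rfl hrL'
      have hyne : y ≠ δd q (w (n + j)) := fun h => hrt (h ▸ hy)
      have hylt : idxL (pre (n + j + 1)) y < idxL (pre (n + j + 1)) (δd q (w (n + j))) := by
        rcases lt_or_eq_of_le hyle with h | h
        · exact h
        · exfalso
          apply hyne
          apply (List.idxOf_inj ((C.hsub (n + j + 1)).subset hy)).1
          simp only [idxL] at h; omega
      have hyidx : idxL (t (n + j + 1)) y < idxL (t (n + j)) q :=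
        lt_of_lt_of_le (lt_of_le_of_lt (C.idx_t_le_pre hy) hylt) hsp.2
      refine ⟨y, ⟨?_, ?_⟩, le_of_lt hyidx, fun h => absurd h hrt, fun _ => hyidx⟩
      · rwa [show n + (j + 1) = n + j + 1 by omega]
      · rwa [show n + (j + 1) = n + j + 1 by omega]
  choose f hf using hstep
  let G : ∀ j : ℕ, {q : Q // P j q} := fun j =>
    Nat.rec ⟨q', h0, hL0⟩ (fun j p => ⟨f j p.1 p.2, (hf j p.1 p.2).1⟩) j
  refine ⟨fun j => (G j).1, rfl, fun j => (G j).2.1, fun j => (G j).2.2, ?_, ?_, ?_⟩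
  · exact fun j => (hf j (G j).1 (G j).2).2.1
  · exact fun j => (hf j (G j).1 (G j).2).2.2.1
  · exact fun j => (hf j (G j).1 (G j).2).2.2.2

end GoodRed

namespace GoodRed

open LDBA

variable {M : LDBA Q A} {w : ℕ → A} {δd : Q → A → Q} {s : ℕ → Set Q} {t pre nw : ℕ → List Q}
variable (C : GoodRed M w δd s t pre nw)

include C in
theorem backward [Fintype Q] {ρ : ℕ → Q} (hρ : AcceptingRun M w ρ) :
    Even (colorSummaryR M t δd w) := by
  classical
  obtain ⟨⟨hρ0, hρs⟩, hρa⟩ := hρ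
  have hex : ∃ n, ρ n ∈ M.Qd := by
    obtain ⟨i, -, hα⟩ := hρa 0
    exact ⟨i, (M.acc_sub _ _ _ hα).2.1⟩
  set n₀ := Nat.find hex with hn₀
  have hn₀Qd : ρ n₀ ∈ M.Qd := Nat.find_spec hex
  have hn₀min : ∀ j, j < n₀ → ρ j ∉ M.Qd := fun j hj => Nat.find_min hex hj
  have hn₀pos : 1 ≤ n₀ := by
    by_contra h
    have h0 : n₀ = 0 := by omega
    rw [h0, hρ0] at hn₀Qd
    exact M.init_out hn₀Qd
  have hsj : ∀ j, j < n₀ → ρ j ∈ s j := by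
    intro j
    induction j with
    | zero =>
      intro _
      rw [C.hs0, hρ0]
      rfl
    | succ j ih =>
      intro hj
      rw [C.hss j]
      exact ⟨hn₀min _ hj, ρ j, ih (by omega), hρs j⟩
  obtain ⟨k, hk⟩ : ∃ k, n₀ = k + 1 := ⟨n₀ - 1, by omega⟩
  have hpre_mem : ρ n₀ ∈ pre n₀ := by
    rw [hk, C.hpre k]
    by_cases hmem : ρ n₀ ∈ (t k).map (fun q => δd q (w k))
    · rw [hk] at hmem
      exact List.mem_append_left _ (dedupFirst_mem.2 hmem)
    · apply List.mem_append_right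
      apply (C.hnw_mem k (ρ (k + 1))).2
      rw [← hk]
      refine ⟨hn₀Qd, ⟨ρ k, hsj k (by omega), ?_⟩, hmem⟩
      have h := hρs k
      rwa [← hk] at h
  have hLn₀ : (fun k' => w (n₀ + k')) ∈ Lang M (ρ n₀) := by
    refine ⟨fun j => ρ (n₀ + j), rfl, fun j => hρs (n₀ + j), ?_⟩
    intro N
    obtain ⟨i, hi, hα⟩ := hρa (n₀ + N)
    refine ⟨i - n₀, by omega, ?_⟩
    show M.α (ρ (n₀ + (i - n₀))) (w (n₀ + (i - n₀))) (ρ (n₀ + (i - n₀ + 1)))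
    rw [show n₀ + (i - n₀ + 1) = i + 1 by omega, show n₀ + (i - n₀) = i by omega]
    exact hα
  obtain ⟨y₀, hy₀t, hy₀L, -⟩ := C.pick (i := n₀) (idxL (pre n₀) (ρ n₀)) (ρ n₀) hpre_mem rfl hLn₀
  obtain ⟨g, hg0, hgt, hgL, hgle, hgchain, hgjump⟩ := C.trace_exists hy₀t hy₀L
  set m : ℕ → ℕ := fun j => idxL (t (n₀ + j)) (g j) with hm
  have hstep : ∀ j, m (j + 1) ≤ m j := fun j => hgle j
  have hmono : ∀ j k', m (j + k') ≤ m j := by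
    intro j k'
    induction k' with
    | zero => exact le_refl _
    | succ k' ih =>
      have h1 : m (j + k' + 1) ≤ m (j + k') := hstep (j + k')
      have h2 : j + (k' + 1) = j + k' + 1 := by omega
      rw [h2]
      omega
  obtain ⟨j₀, hj₀⟩ : ∃ j₀, ∀ j, j₀ ≤ j → m j = m j₀ := by
    have hne : (Set.range m).Nonempty := ⟨m 0, 0, rfl⟩
    obtain ⟨j₀, hj₀⟩ := Nat.sInf_mem hne
    refine ⟨j₀, fun j hj => ?_⟩
    have h1 : m (j₀ + (j - j₀)) ≤ m j₀ := hmono j₀ (j - j₀)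
    rw [show j₀ + (j - j₀) = j by omega] at h1
    have h2 : sInf (Set.range m) ≤ m j := Nat.sInf_le ⟨j, rfl⟩
    omega
  have hnojump : ∀ j, j₀ ≤ j → δd (g j) (w (n₀ + j)) ∈ t (n₀ + j + 1) ∧
      g (j + 1) = δd (g j) (w (n₀ + j)) := by
    intro j hj
    by_cases hr : δd (g j) (w (n₀ + j)) ∈ t (n₀ + j + 1)
    · exact ⟨hr, hgchain j hr⟩
    · exfalso
      have h1 : m (j + 1) < m j := hgjump j hr
      have h2 := hj₀ j hj
      have h3 := hj₀ (j + 1) (by omega)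
      omega
  have hQd0 : g j₀ ∈ M.Qd := C.t_Qd _ _ (hgt j₀)
  have hchain := C.lang_chain (n := n₀ + j₀) hQd0 (hgL j₀) (g := fun k' => g (j₀ + k')) rfl
    (by
      intro j
      show g (j₀ + (j + 1)) = δd (g (j₀ + j)) (w (n₀ + j₀ + j))
      rw [show j₀ + (j + 1) = (j₀ + j) + 1 by omega,
        show n₀ + j₀ + j = n₀ + (j₀ + j) by omega]
      exact (hnojump (j₀ + j) (by omega)).2)
  obtain ⟨-, hacc⟩ := hchain
  have hmlen : m j₀ ≤ M.Qd.ncard := le_trans (idxL_le_len (hgt j₀)) (C.t_len _)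
  have hmpos : 1 ≤ m j₀ := idxL_pos _ _
  have hcolorio : ∀ N, ∃ i, N ≤ i ∧ colorR M t δd w i ≤ 2 * m j₀ := by
    intro N
    obtain ⟨j, hjN, hα⟩ := hacc N
    refine ⟨n₀ + j₀ + j, by omega, ?_⟩
    have hq : g (j₀ + j) ∈ AccR M t δd w (n₀ + j₀ + j) := by
      constructor
      · have := hgt (j₀ + j)
        rwa [show n₀ + (j₀ + j) = n₀ + j₀ + j by omega] at this
      · have hnj := hnojump (j₀ + j) (by omega)
        have hα' := hα
        beta_reduce at hα'
        rw [show j₀ + (j + 1) = j₀ + j + 1 by omega] at hα'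
        rw [hnj.2] at hα'
        rwa [show n₀ + (j₀ + j) = n₀ + j₀ + j by omega] at hα'
    have hcol := colorR_le_acc hq
    have hidx : idxL (t (n₀ + j₀ + j)) (g (j₀ + j)) = m j₀ := by
      have := hj₀ (j₀ + j) (by omega)
      rw [← this]
      show idxL (t (n₀ + j₀ + j)) (g (j₀ + j)) = idxL (t (n₀ + (j₀ + j))) (g (j₀ + j))
      rw [show n₀ + j₀ + j = n₀ + (j₀ + j) by omega]
    omega
  obtain ⟨c, hcle, hcS⟩ := infly_pigeon hcolorio
  have hSne : {c | ∀ N, ∃ i, N ≤ i ∧ colorR M t δd w i = c}.Nonempty := ⟨c, hcS⟩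
  have hc₀S : colorSummaryR M t δd w ∈ {c | ∀ N, ∃ i, N ≤ i ∧ colorR M t δd w i = c} :=
    Nat.sInf_mem hSne
  have hc₀le : colorSummaryR M t δd w ≤ 2 * m j₀ := le_trans (Nat.sInf_le hcS) hcle
  by_contra hodd
  obtain ⟨i, hi, hci⟩ := hc₀S (n₀ + j₀)
  have hne2n : colorSummaryR M t δd w ≠ 2 * M.Qd.ncard + 1 := by omega
  obtain ⟨v, hv, hvd⟩ := colorR_odd_dec hci hodd hne2n
  have hd1 : 1 ≤ idxL (t i) v := idxL_pos _ _
  have hdm : idxL (t i) v ≤ m j₀ := by omega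
  have hstab : ∀ u ∈ t i, idxL (t i) u < idxL (t i) v →
      δd u (w i) ∈ t (i + 1) ∧ idxL (t (i + 1)) (δd u (w i)) = idxL (t i) u := by
    intro u hu hud
    apply C.stable (k := idxL (t i) v - 1) ?_ hu (by omega)
    intro p hp hple
    have hcp := colorR_le_dec (M := M) hp
    have := idxL_pos (t i) p
    omega
  have hj : n₀ + (i - n₀) = i := by omega
  have hjge : j₀ ≤ i - n₀ := by omega
  have hq : g (i - n₀) ∈ t i := by
    have := hgt (i - n₀); rwa [hj] at this
  have hmq : idxL (t i) (g (i - n₀)) = m j₀ := by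
    have := hj₀ (i - n₀) hjge
    rw [← this]
    show idxL (t i) (g (i - n₀)) = idxL (t (n₀ + (i - n₀))) (g (i - n₀))
    rw [hj]
  have hnj := hnojump (i - n₀) hjge
  have hrt : δd (g (i - n₀)) (w i) ∈ t (i + 1) := by
    have := hnj.1; rwa [hj] at this
  have hrm : idxL (t (i + 1)) (δd (g (i - n₀)) (w i)) = m j₀ := by
    have h1 := hj₀ (i - n₀ + 1) (by omega)
    have h2 : m (i - n₀ + 1) = idxL (t (n₀ + (i - n₀ + 1))) (g (i - n₀ + 1)) := rfl
    rw [h1] at h2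
    rw [h2, show n₀ + (i - n₀ + 1) = i + 1 by omega, hnj.2, hj]
  exact C.nodrop hq hmq hrt hrm hv rfl hdm hstab

end GoodRed

namespace GoodRed

open LDBA

variable {M : LDBA Q A} {w : ℕ → A} {δd : Q → A → Q} {s : ℕ → Set Q} {t pre nw : ℕ → List Q}
variable (C : GoodRed M w δd s t pre nw)

include C in
theorem forward [Fintype Q] (hev : Even (colorSummaryR M t δd w)) :
    ∃ ρ, AcceptingRun M w ρ := by
  classical
  have hSne : {c | ∀ N, ∃ i, N ≤ i ∧ colorR M t δd w i = c}.Nonempty := by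
    obtain ⟨c, hcle, hcS⟩ := infly_pigeon (B := 2 * M.Qd.ncard + 1)
      (fun N => ⟨N, le_refl N, C.colorR_bound N⟩)
    exact ⟨c, hcS⟩
  have hdefS : colorSummaryR M t δd w =
      sInf {c | ∀ N, ∃ i, N ≤ i ∧ colorR M t δd w i = c} := rfl
  have hc₀S : ∀ N, ∃ i, N ≤ i ∧ colorR M t δd w i = colorSummaryR M t δd w := by
    have := Nat.sInf_mem hSne
    rw [← hdefS] at this
    exact this
  have hev' : ∀ c, c < colorSummaryR M t δd w →
      ∃ N, ∀ i, N ≤ i → colorR M t δd w i ≠ c := by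
    intro c hc
    have hcnot : c ∉ {c | ∀ N, ∃ i, N ≤ i ∧ colorR M t δd w i = c} := by
      intro h
      have := Nat.sInf_le h
      omega
    simp only [Set.mem_setOf_eq, not_forall] at hcnot
    obtain ⟨N, hN⟩ := hcnot
    refine ⟨N, fun i hi hci => hN ⟨i, hi, hci⟩⟩
  obtain ⟨N₀, hN₀⟩ := eventually_ge (f := colorR M t δd w) _ hev'
  obtain ⟨i₁, hi₁, hci₁⟩ := hc₀S N₀
  obtain ⟨q₁, hq₁acc, hq₁idx⟩ := colorR_even_acc hci₁ hev
  have hk1 : 1 ≤ idxL (t i₁) q₁ := idxL_pos _ _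
  have hstab : ∀ i, N₀ ≤ i → ∀ u ∈ t i, idxL (t i) u ≤ idxL (t i₁) q₁ →
      δd u (w i) ∈ t (i + 1) ∧ idxL (t (i + 1)) (δd u (w i)) = idxL (t i) u := by
    intro i hi u hu huk
    apply C.stable (k := idxL (t i₁) q₁) ?_ hu huk
    intro p hp hpk
    have h1 := colorR_le_dec (M := M) hp
    have h2 := hN₀ i hi
    have h3 := idxL_pos (t i) p
    omega
  set H : ℕ → Q := fun j => Nat.rec q₁ (fun j p => δd p (w (i₁ + j))) j with hH
  have hHstep : ∀ j, H (j + 1) = δd (H j) (w (i₁ + j)) := fun j => rfl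
  have hHinv : ∀ j, H j ∈ t (i₁ + j) ∧ idxL (t (i₁ + j)) (H j) = idxL (t i₁) q₁ := by
    intro j
    induction j with
    | zero => exact ⟨hq₁acc.1, rfl⟩
    | succ j ih =>
      have hs := hstab (i₁ + j) (by omega) (H j) ih.1 (le_of_eq ih.2)
      constructor
      · rw [hHstep]
        exact hs.1
      · rw [hHstep]
        rw [show i₁ + (j + 1) = i₁ + j + 1 by omega, hs.2, ih.2]
  have hacc : ∀ N, ∃ j, N ≤ j ∧ M.α (H j) (w (i₁ + j)) (H (j + 1)) := by
    intro N
    obtain ⟨i, hi, hci⟩ := hc₀S (max N₀ (i₁ + N))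
    obtain ⟨q, hqacc, hqidx⟩ := colorR_even_acc hci hev
    have hij : i₁ + (i - i₁) = i := by omega
    have hHj := hHinv (i - i₁)
    rw [hij] at hHj
    have hq : q = H (i - i₁) := by
      apply (List.idxOf_inj hqacc.1).1
      have h1 := hHj.2
      simp only [idxL] at h1 hqidx hq₁idx ⊢
      omega
    refine ⟨i - i₁, by omega, ?_⟩
    have hα := hqacc.2
    rw [hq] at hα
    rw [hHstep, hij]
    exact hα
  have hq₁pre : q₁ ∈ pre i₁ := (C.hsub i₁).subset hq₁acc.1
  obtain ⟨ρ₀, hρ₀, hρ₀i⟩ := C.pre_reach i₁ q₁ hq₁pre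
  refine ⟨fun j => if j < i₁ then ρ₀ j else H (j - i₁), ⟨?_, ?_⟩, ?_⟩
  · by_cases h : 0 < i₁
    · simp only [if_pos h]
      exact hρ₀.1
    · have h0 : i₁ = 0 := by omega
      simp only [if_neg (by omega : ¬ (0:ℕ) < i₁)]
      show H (0 - i₁) = M.q0
      rw [show 0 - i₁ = 0 by omega]
      show q₁ = M.q0
      rw [← hρ₀i, h0]
      exact hρ₀.1
  · intro j
    by_cases h1 : j + 1 < i₁
    · simp only [if_pos (by omega : j < i₁), if_pos h1]
      exact hρ₀.2 j (by omega)
    · by_cases h2 : j < i₁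
      · have he : j + 1 = i₁ := by omega
        simp only [if_pos h2, if_neg (by omega : ¬ j + 1 < i₁)]
        rw [show j + 1 - i₁ = 0 by omega]
        show M.δ (ρ₀ j) (w j) q₁
        rw [← hρ₀i, ← he]
        exact hρ₀.2 j (by omega)
      · simp only [if_neg h2, if_neg (by omega : ¬ j + 1 < i₁)]
        rw [show j + 1 - i₁ = (j - i₁) + 1 by omega, hHstep]
        have hQd : H (j - i₁) ∈ M.Qd := C.t_Qd _ _ (hHinv (j - i₁)).1
        have hδ := C.hδd (H (j - i₁)) hQd (w (i₁ + (j - i₁)))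
        rw [show i₁ + (j - i₁) = j by omega] at hδ ⊢
        exact hδ
  · intro N
    obtain ⟨j, hjN, hα⟩ := hacc N
    refine ⟨i₁ + j, by omega, ?_⟩
    simp only [if_neg (by omega : ¬ i₁ + j < i₁), if_neg (by omega : ¬ i₁ + j + 1 < i₁)]
    rw [show i₁ + j - i₁ = j by omega, show i₁ + j + 1 - i₁ = j + 1 by omega]
    exact hα

end GoodRed

end MainAux

open LDBA in
/-- Removing redundant vertices from the run DAG preserves acceptance: if the
reduced DAG `G_w*` — whose ordered `Qd`-level lists `t i` are obtained from the
pre-removal lists `pre i` (deterministic successors of the previous reduced level,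
deduplicated keeping the smallest, followed by the `Ord`-sorted newcomers from the
non-deterministic part `s`) by removing vertices, never the smallest one, where each
removed vertex `v_k` satisfies `L(v_k) ⊆ ⋃_{j<k} L(v_j)` (union over the smaller
vertices of the same level), and edges into removed vertices are redirected to the
smallest vertex — then the color summary of `G_w*` is even iff `G_w` contains an
accepting run. -/
theorem stmt_18 {Q A : Type} [Fintype Q] [DecidableEq Q]
    (M : LDBA Q A) (w : ℕ → A)
    (δd : Q → A → Q) (hδd : ∀ q ∈ M.Qd, ∀ σ : A, M.δ q σ (δd q σ))
    (s : ℕ → Set Q) (t pre nw : ℕ → List Q)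
    (hs0 : s 0 = {M.q0})
    (hss : ∀ i, s (i + 1) = {q' | q' ∉ M.Qd ∧ ∃ q ∈ s i, M.δ q (w i) q'})
    (ht0 : t 0 = [] ∧ pre 0 = [])
    (hpre : ∀ i, pre (i + 1) =
      dedupFirst ((t i).map (fun q => δd q (w i))) ++ nw (i + 1))
    (hnw : ∀ i, (nw (i + 1)).Nodup ∧
      (∀ q, q ∈ nw (i + 1) ↔ q ∈ M.Qd ∧ (∃ p ∈ s i, M.δ p (w i) q) ∧
        q ∉ (t i).map (fun q => δd q (w i))) ∧
      (nw (i + 1)).Pairwise (fun a b => M.Ord a < M.Ord b))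
    (hsub : ∀ i, (t i).Sublist (pre i))
    (hhead : ∀ i, (t i).head? = (pre i).head?)
    (hred : ∀ i, ∀ q ∈ pre i, q ∉ t i →
      Lang M q ⊆ ⋃ q' ∈ {q' | q' ∈ pre i ∧ idxL (pre i) q' < idxL (pre i) q},
        Lang M q') :
    Even (colorSummaryR M t δd w) ↔ ∃ ρ, AcceptingRun M w ρ := by
  have C : GoodRed M w δd s t pre nw :=
    ⟨hδd, hs0, hss, ht0.1, ht0.2, hpre, fun i => (hnw i).1, fun i q => (hnw i).2.1 q,
      hsub, hhead, hred⟩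
  constructor
  · exact fun hev => C.forward hev
  · rintro ⟨ρ, hρ⟩
    exact C.backward hρ

end Reduced
end
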